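/- arXiv:2308.05180 — 4 statements merged into one kernel-verified Lean document; each statement's English description precedes it below -/
import Mathlib

section
/- Two-sided bound for localized kernel integrals in the second argument: Let ψ : ℝ → [0,∞) be an even essentially bounded function with nonempty support contained in [−1,1], and let α < d. For x, y ∈ Ω define ψ_{δ,α}(x,y) := η_δ(x)^{−d}·ψ(|y−x|/η_δ(x))·(|y−x|/η_δ(x))^{−α} and Ψ_{δ,α}(x) := ∫_Ω ψ_{δ,α}(y,x) dy. Then for every x ∈ Ω, (1 + κ₁δ)^{−1}·∫_{B(0,1)} ψ(|z|)·|z|^{−α} dz ≤ Ψ_{δ,α}(x) ≤ (1 − κ₁δ)^{−1}·∫_{B(0,1)} ψ(|z|)·|z|^{−α} dz. -/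
open MeasureTheory Real Set Filter Metric
open scoped ENNReal NNReal Topology RealInnerProductSpace

noncomputable section

/-- Euclidean space `ℝ^d`. -/
abbrev Rd (d : ℕ) : Type := EuclideanSpace ℝ (Fin d)

/-- Rescaled heterogeneous localization function `η_δ(x) = δ·q(λ(x))`. -/
def etaD {d : ℕ} (δ : ℝ) (q : ℝ → ℝ) (lam : Rd d → ℝ) (x : Rd d) : ℝ := δ * q (lam x)

/-- Weighted boundary-localized mollifier kernel `ψ_{δ,α}(x,y)`. -/
def psiDA {d : ℕ} (δ α : ℝ) (q : ℝ → ℝ) (lam : Rd d → ℝ) (ψ : ℝ → ℝ) (x y : Rd d) : ℝ :=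
  (etaD δ q lam x) ^ (-(d : ℝ)) * ψ (‖y - x‖ / etaD δ q lam x) *
    (‖y - x‖ / etaD δ q lam x) ^ (-α)

/-!
Fix `x ∈ Ω` and extend `η_δ` from `Ω` to a `κ₁δ`-Lipschitz function `η` on `ℝ^d`. The kernel
`ψ_{δ,α}(·, x)` is supported in the interaction set `V = {y | ‖y - x‖ ≤ η y}`, which lies in `Ω`
because `η x < dist(x, ∂Ω) / 3`, and on `V` it equals `η(y)^{-d} g(T y)` with
`T y = (y - x) / η y` and `g z = ψ ‖z‖ ‖z‖^{-α}`.

Since `κ₁δ < 1`, `T` maps `V` bijectively onto the closed unit ball: injectivity is the Lipschitz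
bound along the ray through `x`, surjectivity is the Banach fixed point theorem for
`y ↦ x + η y • z`. By Rademacher, `η` is differentiable off a null set, whose image under the
Lipschitz map `T|_V` is again null; elsewhere the matrix determinant lemma gives
`det DT(y) = η(y)^{-d} (1 - η(y)⁻¹ Dη(y)(y - x))`, with correction term in `[-κ₁δ, κ₁δ]`.
The change of variables formula for `T` then gives both bounds.
-/

theorem ContinuousLinearMap.det_id_add_smulRight {E : Type*} [NormedAddCommGroup E]
    [NormedSpace ℝ E] [FiniteDimensional ℝ E] (f : E →L[ℝ] ℝ) (u : E) :
    (ContinuousLinearMap.id ℝ E + f.smulRight u).det = 1 + f u := by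
  classical
  let b := Module.finBasis ℝ E
  have hmatrix : LinearMap.toMatrix b b (ContinuousLinearMap.id ℝ E + f.smulRight u : E →L[ℝ] E)
      = 1 + Matrix.replicateCol Unit (b.repr u) * Matrix.replicateRow Unit (fun j => f (b j)) := by
    ext i j
    simp [LinearMap.toMatrix_apply, Matrix.one_apply, Matrix.mul_apply, Finsupp.single_apply,
      eq_comm, mul_comm]
  rw [ContinuousLinearMap.det, ← LinearMap.det_toMatrix b, hmatrix,
    Matrix.det_one_add_replicateCol_mul_replicateRow]
  congr 1
  calc _ = f (∑ i, b.repr u i • b i) := by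
        simp only [dotProduct, map_sum, map_smul, smul_eq_mul, mul_comm]
    _ = f u := by rw [b.sum_repr]

theorem MeasureTheory.Measure.addHaar_image_eq_zero_of_lipschitzOnWith {E : Type*}
    [NormedAddCommGroup E] [NormedSpace ℝ E] [FiniteDimensional ℝ E] [MeasurableSpace E]
    [BorelSpace E] (μ : Measure E) [μ.IsAddHaarMeasure] {K : ℝ≥0} {f : E → E} {s : Set E}
    (hf : LipschitzOnWith K f s) (hs : μ s = 0) : μ (f '' s) = 0 := by
  set n := Module.finrank ℝ E
  have hc := addHaarScalarFactor_volume_hausdorffMeasure_ne_zero n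
  have hH : μH[n] s = 0 := by
    have : μHE[n] s = 0 := absolutelyContinuous_isAddHaarMeasure _ μ hs
    simpa [euclideanHausdorffMeasure_def, hc] using this
  have hHimage : μH[n] (f '' s) = 0 := by
    simpa [hH] using hf.hausdorffMeasure_image_le (d := n) n.cast_nonneg
  exact absolutelyContinuous_isAddHaarMeasure μ μHE[n]
    (by simp [euclideanHausdorffMeasure_def, hHimage])

theorem MeasureTheory.setIntegral_mul_mem_Icc {α : Type*} [MeasurableSpace α] {μ : Measure α}
    {s : Set α} (hs : MeasurableSet s) {w h : α → ℝ} (hw : AEStronglyMeasurable w (μ.restrict s))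
    {a b : ℝ} (ha : 0 < a) (hwab : ∀ y ∈ s, w y ∈ Icc a b) (hh : ∀ y ∈ s, 0 ≤ h y) :
    ∫ y in s, w y * h y ∂μ ∈ Icc (a * ∫ y in s, h y ∂μ) (b * ∫ y in s, h y ∂μ) := by
  have hw_pos : ∀ y ∈ s, 0 < w y := fun y hy => ha.trans_le (hwab y hy).1
  have hint : IntegrableOn (fun y => w y * h y) s μ ↔ IntegrableOn h s μ := by
    refine ⟨fun hwh => ?_, fun hi => ?_⟩
    · refine IntegrableOn.congr_fun
        (hwh.bdd_mul (c := a⁻¹) hw.aemeasurable.inv.aestronglyMeasurable ?_) (fun y hy => ?_) hs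
      · refine (ae_restrict_iff' hs).2 (ae_of_all _ fun y hy => ?_)
        rw [Pi.inv_apply, norm_inv, Real.norm_of_nonneg (hw_pos y hy).le]
        exact inv_anti₀ ha (hwab y hy).1
      · simp [inv_mul_cancel_left₀ (hw_pos y hy).ne']
    · refine hi.bdd_mul (c := b) hw ((ae_restrict_iff' hs).2 (ae_of_all _ fun y hy => ?_))
      rw [Real.norm_of_nonneg (hw_pos y hy).le]
      exact (hwab y hy).2
  by_cases hi : IntegrableOn h s μ
  · rw [← integral_const_mul, ← integral_const_mul]
    refine ⟨setIntegral_mono_on (hi.const_mul a) (hint.2 hi) hs fun y hy => ?_,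
      setIntegral_mono_on (hint.2 hi) (hi.const_mul b) hs fun y hy => ?_⟩
    · exact mul_le_mul_of_nonneg_right (hwab y hy).1 (hh y hy)
    · exact mul_le_mul_of_nonneg_right (hwab y hy).2 (hh y hy)
  · simp [integral_undef hi, integral_undef (mt hint.1 hi)]

section Rescaling

variable {E : Type*} [NormedAddCommGroup E] {η : E → ℝ} {K : ℝ≥0} {x y : E}

def interactionSet (η : E → ℝ) (x : E) : Set E := {y | ‖y - x‖ ≤ η y}

lemma isClosed_interactionSet (hη : Continuous η) (x : E) : IsClosed (interactionSet η x) :=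
  isClosed_le (continuous_id.sub continuous_const).norm hη

lemma nonneg_of_mem_interactionSet (hy : y ∈ interactionSet η x) : 0 ≤ η y :=
  (norm_nonneg _).trans hy

lemma LipschitzWith.le_mul_of_mem_interactionSet (hη : LipschitzWith K η)
    (hy : y ∈ interactionSet η x) : η x ≤ (1 + K) * η y := by
  have hy' : ‖y - x‖ ≤ η y := hy
  have := hη.le_add_mul x y
  rw [dist_comm, dist_eq_norm] at this
  nlinarith [K.coe_nonneg]

lemma LipschitzWith.pos_of_mem_interactionSet (hη : LipschitzWith K η) (hx : 0 < η x)
    (hy : y ∈ interactionSet η x) : 0 < η y :=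
  pos_of_mul_pos_right (hx.trans_le (hη.le_mul_of_mem_interactionSet hy)) (by positivity)

lemma LipschitzWith.interactionSet_subset_ball (hη : LipschitzWith K η) (hK : K < 1) {ρ : ℝ}
    (hxρ : η x < (1 - K) * ρ) : interactionSet η x ⊆ ball x ρ := fun y hy => by
  have hy' : ‖y - x‖ ≤ η y := hy
  have := hη.le_add_mul y x
  have hK' : 0 < 1 - (K : ℝ) := sub_pos.2 (by exact_mod_cast hK)
  rw [dist_eq_norm] at this
  rw [mem_ball, dist_eq_norm, ← mul_lt_mul_iff_right₀ hK']
  linarith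

variable [NormedSpace ℝ E]

def rescaledOffset (η : E → ℝ) (x y : E) : E := (η y)⁻¹ • (y - x)

lemma norm_rescaledOffset (hy : 0 ≤ η y) : ‖rescaledOffset η x y‖ = ‖y - x‖ / η y := by
  rw [rescaledOffset, norm_smul, norm_inv, Real.norm_of_nonneg hy, inv_mul_eq_div]

lemma mapsTo_rescaledOffset :
    MapsTo (rescaledOffset η x) (interactionSet η x) (closedBall 0 1) := fun y hy => by
  have hη := nonneg_of_mem_interactionSet hy
  rw [mem_closedBall_zero_iff, norm_rescaledOffset hη]
  exact div_le_one_of_le₀ hy hη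

lemma smul_rescaledOffset (hy : y ∈ interactionSet η x) :
    η y • rescaledOffset η x y = y - x := by
  rcases (nonneg_of_mem_interactionSet hy).eq_or_lt with h | h
  · have hyx : y - x = 0 := norm_le_zero_iff.mp (h ▸ hy)
    simp [rescaledOffset, hyx]
  · exact smul_inv_smul₀ h.ne' _

lemma LipschitzWith.injOn_rescaledOffset (hη : LipschitzWith K η) (hK : K < 1) :
    InjOn (rescaledOffset η x) (interactionSet η x) := by
  intro y₁ hy₁ y₂ hy₂ hT
  set z := rescaledOffset η x y₁
  have hz : ‖z‖ ≤ 1 := mem_closedBall_zero_iff.mp (mapsTo_rescaledOffset hy₁)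
  have hdiff : y₂ - y₁ = (η y₂ - η y₁) • z := by
    rw [sub_smul, smul_rescaledOffset hy₁, hT, smul_rescaledOffset hy₂]
    abel
  have hlip := hη.dist_le_mul y₂ y₁
  rw [Real.dist_eq, dist_eq_norm, hdiff, norm_smul, Real.norm_eq_abs] at hlip
  have heq : η y₂ = η y₁ := by
    have : |η y₂ - η y₁| ≤ K * |η y₂ - η y₁| :=
      hlip.trans (by gcongr; exact mul_le_of_le_one_right (abs_nonneg _) hz)
    have : |η y₂ - η y₁| = 0 := by nlinarith [abs_nonneg (η y₂ - η y₁)]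
    linarith [abs_eq_zero.mp this]
  exact (sub_eq_zero.mp (by simpa [heq] using hdiff)).symm

lemma LipschitzWith.surjOn_rescaledOffset [CompleteSpace E] (hη : LipschitzWith K η) (hK : K < 1)
    (hx : 0 < η x) : SurjOn (rescaledOffset η x) (interactionSet η x) (closedBall 0 1) := by
  intro z hz
  rw [mem_closedBall_zero_iff] at hz
  -- `rescaledOffset η x y = z` is the fixed point equation `y = x + η y • z` of a contraction
  have hΦ : ContractingWith (K * ‖z‖₊) (fun y => x + η y • z) := by
    refine ⟨lt_of_le_of_lt (mul_le_of_le_one_right K.2 (by exact_mod_cast hz)) hK,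
      LipschitzWith.of_dist_le_mul fun a b => ?_⟩
    rw [dist_add_left, dist_eq_norm, ← sub_smul, norm_smul, Real.norm_eq_abs, ← Real.dist_eq,
      NNReal.coe_mul, coe_nnnorm, mul_right_comm]
    gcongr
    exact hη.dist_le_mul a b
  set y := hΦ.fixedPoint
  have hy : y - x = η y • z := (eq_sub_of_add_eq' hΦ.fixedPoint_isFixedPt).symm
  have hnorm : ‖y - x‖ = |η y| * ‖z‖ := by rw [hy, norm_smul, Real.norm_eq_abs]
  have hpos : 0 < η y := by
    have := hη.le_add_mul x y
    rw [dist_comm, dist_eq_norm, hnorm] at this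
    by_contra! hneg
    rw [abs_of_nonpos hneg] at this
    have hKz : (K : ℝ) * ‖z‖ ≤ 1 :=
      mul_le_one₀ (by exact_mod_cast hK.le) (norm_nonneg z) hz
    nlinarith [mul_nonneg (neg_nonneg.mpr hneg) (sub_nonneg.mpr hKz)]
  refine ⟨y, ?_, ?_⟩
  · show ‖y - x‖ ≤ η y
    rw [hnorm, abs_of_pos hpos]
    exact mul_le_of_le_one_right hpos.le hz
  · rw [rescaledOffset, hy, inv_smul_smul₀ hpos.ne']

lemma LipschitzWith.lipschitzOnWith_rescaledOffset (hη : LipschitzWith K η) (hx : 0 < η x) :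
    LipschitzOnWith (Real.toNNReal ((1 + K) ^ 2 / η x)) (rescaledOffset η x)
      (interactionSet η x) := by
  refine LipschitzOnWith.of_dist_le' fun y₁ hy₁ y₂ hy₂ => ?_
  have hle := hη.le_mul_of_mem_interactionSet hy₁
  have hpos := hη.pos_of_mem_interactionSet hx hy₁
  set z := rescaledOffset η x y₂
  have hz : ‖z‖ ≤ 1 := mem_closedBall_zero_iff.mp (mapsTo_rescaledOffset hy₂)
  have hdiff : rescaledOffset η x y₁ - z = (η y₁)⁻¹ • ((y₁ - y₂) + (η y₂ - η y₁) • z) := by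
    rw [sub_smul, smul_rescaledOffset hy₂, smul_add, smul_sub, smul_sub, smul_sub,
      inv_smul_smul₀ hpos.ne', rescaledOffset, smul_sub]
    abel
  have hlip : |η y₂ - η y₁| ≤ K * dist y₁ y₂ := by
    rw [← Real.dist_eq, dist_comm y₁]; exact hη.dist_le_mul y₂ y₁
  calc dist (rescaledOffset η x y₁) z
      ≤ (η y₁)⁻¹ * (dist y₁ y₂ + |η y₂ - η y₁| * ‖z‖) := by
        rw [dist_eq_norm, hdiff, norm_smul, norm_inv, Real.norm_of_nonneg hpos.le]
        gcongr
        exact (norm_add_le _ _).trans (by rw [norm_smul, Real.norm_eq_abs, dist_eq_norm])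
    _ ≤ (η y₁)⁻¹ * (1 + K) * dist y₁ y₂ := by
        rw [mul_assoc]
        gcongr
        nlinarith [abs_nonneg (η y₂ - η y₁), dist_nonneg (x := y₁) (y := y₂)]
    _ ≤ (1 + K) ^ 2 / η x * dist y₁ y₂ := by
        gcongr
        rw [inv_mul_le_iff₀ hpos, sq, ← mul_div_assoc, le_div_iff₀ hx]
        nlinarith [K.coe_nonneg]

lemma LipschitzWith.image_rescaledOffset_interactionSet [CompleteSpace E]
    (hη : LipschitzWith K η) (hK : K < 1) (hx : 0 < η x) :
    rescaledOffset η x '' interactionSet η x = closedBall 0 1 :=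
  mapsTo_rescaledOffset.image_subset.antisymm (hη.surjOn_rescaledOffset hK hx)

lemma LipschitzWith.image_rescaledOffset_ae_eq_closedBall [FiniteDimensional ℝ E]
    [MeasurableSpace E] [BorelSpace E] (μ : Measure E) [μ.IsAddHaarMeasure]
    (hη : LipschitzWith K η) (hK : K < 1) (hx : 0 < η x) {s : Set E}
    (hs : s ⊆ interactionSet η x) (hs_null : μ (interactionSet η x \ s) = 0) :
    rescaledOffset η x '' s =ᵐ[μ] closedBall (0 : E) 1 := by
  rw [← hη.image_rescaledOffset_interactionSet hK hx]
  refine ae_eq_set.2 ⟨by rw [sdiff_eq_empty.2 (image_mono hs), measure_empty],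
    measure_mono_null ?_ (Measure.addHaar_image_eq_zero_of_lipschitzOnWith
      μ ((hη.lipschitzOnWith_rescaledOffset hx).mono sdiff_subset) hs_null)⟩
  rintro _ ⟨⟨y, hy, rfl⟩, hys⟩
  exact ⟨y, ⟨hy, fun hy' => hys ⟨y, hy', rfl⟩⟩, rfl⟩

def rescaledOffsetFDeriv (η : E → ℝ) (x y : E) : E →L[ℝ] E :=
  (η y)⁻¹ • (ContinuousLinearMap.id ℝ E + (-(η y)⁻¹ • fderiv ℝ η y).smulRight (y - x))

lemma hasFDerivAt_rescaledOffset (hd : DifferentiableAt ℝ η y) (hy : η y ≠ 0) :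
    HasFDerivAt (rescaledOffset η x) (rescaledOffsetFDeriv η x y) y := by
  have hinv : HasFDerivAt (fun y => (η y)⁻¹) (-(η y ^ 2)⁻¹ • fderiv ℝ η y) y :=
    (hasDerivAt_inv hy).comp_hasFDerivAt y hd.hasFDerivAt
  refine (hinv.smul ((hasFDerivAt_id y).sub_const x)).congr_fderiv ?_
  ext v
  simp only [rescaledOffsetFDeriv, neg_smul, smul_add, add_apply, smul_apply,
    ContinuousLinearMap.id_apply, ContinuousLinearMap.smulRight_apply, neg_apply, smul_eq_mul,
    smul_neg, smul_smul, id_eq]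
  ring_nf

lemma det_rescaledOffsetFDeriv [FiniteDimensional ℝ E] :
    (rescaledOffsetFDeriv η x y).det
      = (η y)⁻¹ ^ Module.finrank ℝ E * (1 - (η y)⁻¹ * fderiv ℝ η y (y - x)) := by
  rw [rescaledOffsetFDeriv, ContinuousLinearMap.det, ContinuousLinearMap.toLinearMap_smul,
    LinearMap.det_smul, ← ContinuousLinearMap.det, ContinuousLinearMap.det_id_add_smulRight]
  simp [sub_eq_add_neg]

lemma LipschitzWith.abs_inv_mul_fderiv_le (hη : LipschitzWith K η) (hy : y ∈ interactionSet η x)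
    (hpos : 0 < η y) : |(η y)⁻¹ * fderiv ℝ η y (y - x)| ≤ K := by
  rw [abs_mul, abs_inv, abs_of_pos hpos, inv_mul_le_iff₀ hpos, mul_comm]
  calc |fderiv ℝ η y (y - x)| ≤ ‖fderiv ℝ η y‖ * ‖y - x‖ := (fderiv ℝ η y).le_opNorm _
    _ ≤ K * η y := mul_le_mul (norm_fderiv_le_of_lipschitz ℝ hη) hy (norm_nonneg _) K.2

theorem LipschitzWith.setIntegral_closedBall_mem_Icc [FiniteDimensional ℝ E] [MeasurableSpace E]
    [BorelSpace E] (μ : Measure E) [μ.IsAddHaarMeasure] (hη : LipschitzWith K η) (hK : K < 1)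
    (hx : 0 < η x) {g : E → ℝ} (hg : ∀ z ∈ closedBall (0 : E) 1, 0 ≤ g z) :
    ∫ z in closedBall (0 : E) 1, g z ∂μ ∈
      Icc ((1 - K) * ∫ y in interactionSet η x,
              (η y)⁻¹ ^ Module.finrank ℝ E * g (rescaledOffset η x y) ∂μ)
        ((1 + K) * ∫ y in interactionSet η x,
              (η y)⁻¹ ^ Module.finrank ℝ E * g (rescaledOffset η x y) ∂μ) := by
  set V := interactionSet η x
  set s := V ∩ {y | DifferentiableAt ℝ η y}
  have hV : MeasurableSet V := (isClosed_interactionSet hη.continuous x).measurableSet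
  have hs : MeasurableSet s := hV.inter (measurableSet_of_differentiableAt ℝ η)
  have hVs : μ (V \ s) = 0 :=
    measure_mono_null (fun y hy => hy.2 ∘ And.intro hy.1) (ae_iff.mp hη.ae_differentiableAt)
  have hs_ae : s =ᵐ[μ] V :=
    ae_eq_set.2 ⟨by rw [sdiff_eq_empty.2 inter_subset_left, measure_empty], hVs⟩
  have himage := hη.image_rescaledOffset_ae_eq_closedBall μ hK hx inter_subset_left hVs
  have hpos : ∀ y ∈ s, 0 < η y := fun y hy => hη.pos_of_mem_interactionSet hx hy.1
  set w := fun y => 1 - (η y)⁻¹ * fderiv ℝ η y (y - x)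
  set h := fun y => (η y)⁻¹ ^ Module.finrank ℝ E * g (rescaledOffset η x y)
  have hw : ∀ y ∈ s, w y ∈ Icc (1 - (K : ℝ)) (1 + K) := fun y hy => by
    have := abs_le.mp (hη.abs_inv_mul_fderiv_le hy.1 (hpos y hy))
    exact ⟨by linarith [this.2], by linarith [this.1]⟩
  have hw_meas : Measurable w := by
    have : Measurable fun y => fderiv ℝ η y (y - x) :=
      isBoundedBilinearMap_apply.continuous.measurable.comp
        ((measurable_fderiv ℝ η).prodMk (measurable_id.sub_const x))
    exact measurable_const.sub (hη.continuous.measurable.inv.mul this)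
  have hcov : ∫ z in closedBall (0 : E) 1, g z ∂μ = ∫ y in s, w y * h y ∂μ := by
    rw [← setIntegral_congr_set himage, integral_image_eq_integral_abs_det_fderiv_smul μ hs
      (fun y hy => (hasFDerivAt_rescaledOffset hy.2 (hpos y hy).ne').hasFDerivWithinAt)
      ((hη.injOn_rescaledOffset hK).mono inter_subset_left)]
    refine setIntegral_congr_fun hs fun y hy => ?_
    have hη_inv : 0 ≤ (η y)⁻¹ ^ Module.finrank ℝ E := pow_nonneg (inv_nonneg.2 (hpos y hy).le) _
    have hw_pos : 0 ≤ w y := le_trans (sub_nonneg.2 (by exact_mod_cast hK.le)) (hw y hy).1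
    rw [det_rescaledOffsetFDeriv, abs_of_nonneg (mul_nonneg hη_inv hw_pos), smul_eq_mul]
    ring
  rw [hcov, ← setIntegral_congr_set hs_ae]
  exact setIntegral_mul_mem_Icc hs hw_meas.aestronglyMeasurable (sub_pos.2 (by exact_mod_cast hK))
    hw fun y hy => mul_nonneg (pow_nonneg (inv_nonneg.2 (hpos y hy).le) _)
      (hg _ (mapsTo_rescaledOffset hy.1))

end Rescaling

lemma lipschitzOnWith_one_Ici_of_deriv {q : ℝ → ℝ} (hq : Differentiable ℝ q)
    (hq' : ∀ r, 0 ≤ r → |deriv q r| ≤ 1) : LipschitzOnWith 1 q (Ici 0) :=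
  (convex_Ici 0).lipschitzOnWith_of_nnnorm_deriv_le (fun r _ => hq r) fun r hr => by
    rw [← NNReal.coe_le_coe, coe_nnnorm, Real.norm_eq_abs]
    exact hq' r hr

lemma monotoneOn_Ici_of_deriv {q : ℝ → ℝ} (hq : Differentiable ℝ q)
    (hq' : ∀ r, 0 ≤ r → 0 ≤ deriv q r) : MonotoneOn q (Ici 0) :=
  monotoneOn_of_deriv_nonneg (convex_Ici 0) hq.continuous.continuousOn
    (fun r _ => (hq r).differentiableWithinAt)
    fun r hr => hq' r (interior_subset hr)

lemma MonotoneOn.le_mul_rpow_logb_of_doubling {q : ℝ → ℝ} {C κ r : ℝ}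
    (hmono : MonotoneOn q (Ici 0)) (hC : 1 ≤ C) (hdbl : ∀ r, 0 < r → q (2 * r) ≤ C * q r)
    (hκ : 1 ≤ κ) (hr : 0 < r) (hqr : 0 ≤ q r) : q (κ * r) ≤ C * κ ^ logb 2 C * q r := by
  have hiter : ∀ n : ℕ, q (2 ^ n * r) ≤ C ^ n * q r := by
    intro n
    induction n with
    | zero => simp
    | succ n ih =>
      calc q (2 ^ (n + 1) * r) = q (2 * (2 ^ n * r)) := by ring_nf
        _ ≤ C * q (2 ^ n * r) := hdbl _ (by positivity)
        _ ≤ C * (C ^ n * q r) := by gcongr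
        _ = C ^ (n + 1) * q r := by ring
  -- round `κ` up to the power of two `2 ^ n` with `n = ⌈log₂ κ⌉`
  set n := ⌈logb 2 κ⌉₊
  have hlog : 0 ≤ logb 2 κ := logb_nonneg one_lt_two hκ
  have hκn : κ ≤ 2 ^ n := by
    calc κ = 2 ^ logb 2 κ := (rpow_logb two_pos (by norm_num) (by linarith)).symm
      _ ≤ 2 ^ (n : ℝ) := rpow_le_rpow_of_exponent_le one_le_two (Nat.le_ceil _)
      _ = 2 ^ n := rpow_natCast 2 n
  have hCn : C ^ n ≤ C * κ ^ logb 2 C := by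
    calc C ^ n = C ^ (n : ℝ) := (rpow_natCast C n).symm
      _ ≤ C ^ (logb 2 κ + 1) := rpow_le_rpow_of_exponent_le hC (Nat.ceil_lt_add_one hlog).le
      _ = C * κ ^ logb 2 C := by
        rw [rpow_add (by linarith), rpow_one, mul_comm, rpow_def_of_pos (by linarith),
          rpow_def_of_pos (by linarith), logb, logb]
        ring_nf
  calc q (κ * r) ≤ q (2 ^ n * r) :=
        hmono (by simp only [mem_Ici]; positivity) (by simp only [mem_Ici]; positivity)
          (by gcongr)
    _ ≤ C ^ n * q r := hiter n
    _ ≤ C * κ ^ logb 2 C * q r := by gcongr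

lemma IsOpen.infDist_frontier_eq_infDist_compl {E : Type*} [NormedAddCommGroup E]
    [NormedSpace ℝ E] [FiniteDimensional ℝ E] {Ω : Set E} (hΩ : IsOpen Ω) (hne : Ω ≠ univ)
    {x : E} (hx : x ∈ Ω) : infDist x (frontier Ω) = infDist x Ωᶜ := by
  obtain ⟨y, hy, hxy⟩ := exists_mem_frontier_infDist_compl_eq_dist hx hne
  refine le_antisymm ((infDist_le_dist_of_mem hy).trans hxy.ge) ?_
  exact infDist_le_infDist_of_subset (fun z hz => (hΩ.frontier_eq ▸ hz).2) ⟨y, hy⟩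

lemma IsOpen.infDist_frontier_pos {E : Type*} [NormedAddCommGroup E] [NormedSpace ℝ E]
    [FiniteDimensional ℝ E] {Ω : Set E} (hΩ : IsOpen Ω) (hne : Ω ≠ univ) {x : E} (hx : x ∈ Ω) :
    0 < infDist x (frontier Ω) := by
  rw [hΩ.infDist_frontier_eq_infDist_compl hne hx]
  exact (hΩ.isClosed_compl.notMem_iff_infDist_pos (nonempty_compl.2 hne)).1 (not_not_intro hx)

lemma IsOpen.ball_infDist_frontier_subset {E : Type*} [NormedAddCommGroup E] [NormedSpace ℝ E]
    [FiniteDimensional ℝ E] {Ω : Set E} (hΩ : IsOpen Ω) (hne : Ω ≠ univ) {x : E} (hx : x ∈ Ω) :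
    ball x (infDist x (frontier Ω)) ⊆ Ω := by
  rw [hΩ.infDist_frontier_eq_infDist_compl hne hx]
  exact ball_infDist_compl_subset

lemma exists_lipschitzWith_eqOn_etaD {d : ℕ} {Ω : Set (Rd d)} {lam : Rd d → ℝ} {q : ℝ → ℝ}
    {κ1 δ : ℝ} (hκ1 : 0 ≤ κ1) (hδ : 0 ≤ δ) (hlam_nonneg : ∀ y ∈ Ω, 0 ≤ lam y)
    (hlam_lip : ∀ x ∈ Ω, ∀ y ∈ Ω, |lam x - lam y| ≤ κ1 * ‖x - y‖)
    (hq : LipschitzOnWith 1 q (Ici 0)) :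
    ∃ η : Rd d → ℝ, LipschitzWith (Real.toNNReal (κ1 * δ)) η ∧ EqOn η (etaD δ q lam) Ω := by
  have hlam : LipschitzOnWith (Real.toNNReal κ1) lam Ω :=
    LipschitzOnWith.of_dist_le' fun a ha b hb => by
      simpa [Real.dist_eq, dist_eq_norm] using hlam_lip a ha b hb
  obtain ⟨l, hl, hleq⟩ := hlam.extend_real
  have hl_pos := hl.max_const 0
  refine ⟨fun y => δ * q (max (l y) 0), LipschitzWith.of_dist_le' fun a b => ?_, fun y hy => ?_⟩
  · calc dist (δ * q (max (l a) 0)) (δ * q (max (l b) 0))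
        = δ * dist (q (max (l a) 0)) (q (max (l b) 0)) := by
          rw [Real.dist_eq, Real.dist_eq, ← mul_sub, abs_mul, abs_of_nonneg hδ]
      _ ≤ δ * dist (max (l a) 0) (max (l b) 0) := by
          gcongr
          simpa using
            hq.dist_le_mul _ (mem_Ici.2 (le_max_right _ _)) _ (mem_Ici.2 (le_max_right _ _))
      _ ≤ δ * (κ1 * dist a b) := by
          gcongr
          simpa [Real.coe_toNNReal _ hκ1] using hl_pos.dist_le_mul a b
      _ = κ1 * δ * dist a b := by ring
  · simp [etaD, ← hleq hy, max_eq_left (hlam_nonneg y hy)]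

lemma mul_lt_one_third_of_lt {δ a b : ℝ} (hδ : 0 < δ) (h : δ < 1 / (3 * max 1 (max a b))) :
    δ * a < 1 / 3 ∧ δ * b < 1 / 3 := by
  have hM : 0 < max 1 (max a b) := one_pos.trans_le (le_max_left _ _)
  rw [lt_div_iff₀ (by positivity)] at h
  constructor <;> nlinarith [le_max_left a b, le_max_right a b, le_max_right 1 (max a b)]

lemma mul_lt_div_three_of_doubling {q : ℝ → ℝ} {C κ δ ρ l : ℝ} (hmono : MonotoneOn q (Ici 0))
    (hq_pos : ∀ r : ℝ, 0 < r → 0 < q r ∧ q r ≤ r) (hC : 1 ≤ C)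
    (hq_dbl : ∀ r : ℝ, 0 < r → q (2 * r) ≤ C * q r) (hκ : 1 ≤ κ) (hδ : 0 ≤ δ)
    (hδC : δ * (C * κ ^ logb 2 C) < 1 / 3) (hρ : 0 < ρ) (hl : 0 ≤ l) (hlρ : l ≤ κ * ρ) :
    δ * q l < ρ / 3 := by
  have hql : q l ≤ C * κ ^ logb 2 C * ρ :=
    calc q l ≤ q (κ * ρ) := hmono hl (by simp only [mem_Ici]; positivity) hlρ
      _ ≤ C * κ ^ logb 2 C * q ρ :=
        hmono.le_mul_rpow_logb_of_doubling hC hq_dbl hκ hρ (hq_pos ρ hρ).1.le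
      _ ≤ C * κ ^ logb 2 C * ρ := by gcongr; exact (hq_pos ρ hρ).2
  calc δ * q l ≤ δ * (C * κ ^ logb 2 C) * ρ := by rw [mul_assoc]; gcongr
    _ < 1 / 3 * ρ := by gcongr
    _ = ρ / 3 := by ring

theorem setIntegral_psiDA_bounds {d : ℕ} (hd : 1 ≤ d) {Ω : Set (Rd d)} (hΩ : IsOpen Ω)
    {δ α : ℝ} {q : ℝ → ℝ} {lam : Rd d → ℝ} {ψ : ℝ → ℝ} {η : Rd d → ℝ} {K : ℝ≥0}
    (hη : LipschitzWith K η) (hK : K < 1) (hηΩ : EqOn η (etaD δ q lam) Ω)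
    (hpos : ∀ y ∈ Ω, 0 < η y) {x : Rd d} (hx : x ∈ Ω) (hVΩ : interactionSet η x ⊆ Ω)
    (hψ_nonneg : ∀ t, 0 ≤ ψ t) (hψ_supp : Function.support ψ ⊆ Icc (-1) 1) :
    (1 + (K : ℝ))⁻¹ * ∫ z in ball (0 : Rd d) 1, ψ ‖z‖ * ‖z‖ ^ (-α)
        ≤ ∫ y in Ω, psiDA δ α q lam ψ y x ∧
      ∫ y in Ω, psiDA δ α q lam ψ y x
        ≤ (1 - (K : ℝ))⁻¹ * ∫ z in ball (0 : Rd d) 1, ψ ‖z‖ * ‖z‖ ^ (-α) := by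
  -- `Rd d` is nontrivial, so the unit sphere is null
  have : Nonempty (Fin d) := ⟨⟨0, hd⟩⟩
  set g : Rd d → ℝ := fun z => ψ ‖z‖ * ‖z‖ ^ (-α)
  set V := interactionSet η x
  have hkernel : Ω.indicator (fun y => psiDA δ α q lam ψ y x)
      = V.indicator fun y => (η y)⁻¹ ^ Module.finrank ℝ (Rd d) * g (rescaledOffset η x y) := by
    ext y
    by_cases hyΩ : y ∈ Ω
    · have hy := hpos y hyΩ
      rw [indicator_of_mem hyΩ, psiDA, ← hηΩ hyΩ, rpow_neg hy.le, rpow_natCast, ← inv_pow,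
        finrank_euclideanSpace_fin, norm_sub_rev]
      by_cases hyV : y ∈ V
      · rw [indicator_of_mem hyV, mul_assoc]
        simp only [g, norm_rescaledOffset hy.le]
      · have hψ : ψ (‖y - x‖ / η y) = 0 := Function.notMem_support.mp fun h =>
          hyV ((div_le_one hy).mp (hψ_supp h).2)
        rw [indicator_of_notMem hyV, hψ, mul_zero, zero_mul]
    · rw [indicator_of_notMem hyΩ, indicator_of_notMem fun h => hyΩ (hVΩ h)]
  have hball : ∫ z in ball (0 : Rd d) 1, g z = ∫ z in closedBall (0 : Rd d) 1, g z :=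
    setIntegral_congr_set <| ae_eq_set.2
      ⟨by rw [sdiff_eq_empty.2 ball_subset_closedBall, measure_empty],
        by rw [closedBall_sdiff_ball]; exact Measure.addHaar_sphere volume 0 1⟩
  obtain ⟨hlower, hupper⟩ := hη.setIntegral_closedBall_mem_Icc volume hK (hpos x hx) (g := g)
    fun z _ => mul_nonneg (hψ_nonneg _) (rpow_nonneg (norm_nonneg _) _)
  have hK' : (K : ℝ) < 1 := by exact_mod_cast hK
  rw [← integral_indicator hΩ.measurableSet, hkernel,
    integral_indicator (isClosed_interactionSet hη.continuous x).measurableSet, hball]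
  constructor
  · rw [inv_mul_le_iff₀ (by positivity)]
    exact hupper
  · rw [inv_mul_eq_div, le_div_iff₀ (by linarith), mul_comm]
    exact hlower

theorem statement_2_general {d : ℕ} (hd : 1 ≤ d)
    -- Ω : bounded open connected (Lipschitz) domain
    (Ω : Set (Rd d)) (hΩo : IsOpen Ω)
    (hΩb : Bornology.IsBounded Ω)
    -- (A_λ)
    (lam : Rd d → ℝ) (κ0 κ1 : ℝ) (hκ0 : 1 ≤ κ0) (hκ1 : 0 < κ1)
    (hlam_nonneg : ∀ x ∈ closure Ω, 0 ≤ lam x)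
    (hlam_lb : ∀ x ∈ closure Ω, κ0⁻¹ * Metric.infDist x (frontier Ω) ≤ lam x)
    (hlam_ub : ∀ x ∈ closure Ω, lam x ≤ κ0 * Metric.infDist x (frontier Ω))
    (hlam_lip : ∀ x ∈ Ω, ∀ y ∈ Ω, |lam x - lam y| ≤ κ1 * ‖x - y‖)
    -- (A_q)
    (q : ℝ → ℝ) (Cq : ℝ) (hq_C1 : ContDiff ℝ 1 q)
    (hq_pos : ∀ r : ℝ, 0 < r → 0 < q r ∧ q r ≤ r)
    (hq_deriv : ∀ r : ℝ, 0 ≤ r → 0 ≤ deriv q r ∧ deriv q r ≤ 1)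
    (hCq : 1 ≤ Cq) (hq_dbl : ∀ r : ℝ, 0 < r → q (2 * r) ≤ Cq * q r)
    -- (A_δ)
    (δ : ℝ) (hδ : 0 < δ)
    (hδ0 : δ < 1 / (3 * max 1 (max κ1 (Cq * κ0 ^ Real.logb 2 Cq))))
    -- ψ : even, essentially bounded, nonempty support contained in [-1,1]
    (ψ : ℝ → ℝ) (hψ_nonneg : ∀ t, 0 ≤ ψ t)
    (hψ_supp : Function.support ψ ⊆ Set.Icc (-1) 1)
    -- exponent
    (α : ℝ) :
    ∀ x ∈ Ω,
      ((1 + κ1 * δ)⁻¹ * ∫ z in Metric.ball (0 : Rd d) 1, ψ ‖z‖ * ‖z‖ ^ (-α)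
          ≤ ∫ y in Ω, psiDA δ α q lam ψ y x) ∧
      (∫ y in Ω, psiDA δ α q lam ψ y x
          ≤ (1 - κ1 * δ)⁻¹ * ∫ z in Metric.ball (0 : Rd d) 1, ψ ‖z‖ * ‖z‖ ^ (-α)) := by
  intro x hx
  have : Nonempty (Fin d) := ⟨⟨0, hd⟩⟩
  have hΩ_ne : Ω ≠ univ := fun h => NormedSpace.unbounded_univ ℝ (Rd d) (h ▸ hΩb)
  have hq_diff : Differentiable ℝ q := hq_C1.differentiable one_ne_zero
  obtain ⟨hK, hδC⟩ := mul_lt_one_third_of_lt hδ hδ0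
  obtain ⟨η, hη, hηΩ⟩ := exists_lipschitzWith_eqOn_etaD hκ1.le hδ.le
    (fun y hy => hlam_nonneg y (subset_closure hy)) hlam_lip
    (lipschitzOnWith_one_Ici_of_deriv hq_diff fun r hr =>
      abs_le.2 ⟨by linarith [(hq_deriv r hr).1], (hq_deriv r hr).2⟩)
  have hpos : ∀ y ∈ Ω, 0 < η y := fun y hy => by
    have hlam := (mul_pos (inv_pos.2 (by linarith)) (hΩo.infDist_frontier_pos hΩ_ne hy)).trans_le
      (hlam_lb y (subset_closure hy))
    rw [hηΩ hy, etaD]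
    exact mul_pos hδ (hq_pos _ hlam).1
  have hηx : η x < infDist x (frontier Ω) / 3 := by
    rw [hηΩ hx, etaD]
    exact mul_lt_div_three_of_doubling (monotoneOn_Ici_of_deriv hq_diff fun r hr => (hq_deriv r hr).1)
      hq_pos hCq hq_dbl hκ0 hδ.le hδC (hΩo.infDist_frontier_pos hΩ_ne hx)
      (hlam_nonneg x (subset_closure hx)) (hlam_ub x (subset_closure hx))
  have hK_coe : (Real.toNNReal (κ1 * δ) : ℝ) = κ1 * δ := Real.coe_toNNReal _ (by positivity)
  have hK₁ : Real.toNNReal (κ1 * δ) < 1 := Real.toNNReal_lt_one.2 (by linarith)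
  have hVΩ : interactionSet η x ⊆ Ω :=
    (hη.interactionSet_subset_ball hK₁ (by nlinarith [hΩo.infDist_frontier_pos hΩ_ne hx])).trans
      (hΩo.ball_infDist_frontier_subset hΩ_ne hx)
  have hbounds := setIntegral_psiDA_bounds (α := α) hd hΩo hη hK₁ hηΩ hpos hx hVΩ hψ_nonneg
    hψ_supp
  rwa [hK_coe] at hbounds

/-- two-sided bound for localized kernel integrals in the second argument. -/
theorem statement_2 {d : ℕ} (hd : 1 ≤ d)
    -- Ω : bounded open connected (Lipschitz) domain
    (Ω : Set (Rd d)) (hΩo : IsOpen Ω) (hΩne : Ω.Nonempty)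
    (hΩb : Bornology.IsBounded Ω) (hΩc : IsConnected Ω)
    -- (A_λ)
    (lam : Rd d → ℝ) (κ0 κ1 : ℝ) (hκ0 : 1 ≤ κ0) (hκ1 : 0 < κ1)
    (hlam_nonneg : ∀ x ∈ closure Ω, 0 ≤ lam x)
    (hlam_lb : ∀ x ∈ closure Ω, κ0⁻¹ * Metric.infDist x (frontier Ω) ≤ lam x)
    (hlam_ub : ∀ x ∈ closure Ω, lam x ≤ κ0 * Metric.infDist x (frontier Ω))
    (hlam_lip : ∀ x ∈ Ω, ∀ y ∈ Ω, |lam x - lam y| ≤ κ1 * ‖x - y‖)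
    -- (A_q)
    (q : ℝ → ℝ) (Cq cq : ℝ) (hq_C1 : ContDiff ℝ 1 q) (hq0 : q 0 = 0)
    (hq_pos : ∀ r : ℝ, 0 < r → 0 < q r ∧ q r ≤ r)
    (hq_deriv : ∀ r : ℝ, 0 ≤ r → 0 ≤ deriv q r ∧ deriv q r ≤ 1)
    (hcq : 0 < cq) (hq_deriv_pos : ∀ r ∈ Set.Ioc (0:ℝ) cq, 0 < deriv q r)
    (hCq : 1 ≤ Cq) (hq_dbl : ∀ r : ℝ, 0 < r → q (2 * r) ≤ Cq * q r)
    -- (A_δ)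
    (δ : ℝ) (hδ : 0 < δ)
    (hδ0 : δ < 1 / (3 * max 1 (max κ1 (Cq * κ0 ^ Real.logb 2 Cq))))
    -- ψ : even, essentially bounded, nonempty support contained in [-1,1]
    (ψ : ℝ → ℝ) (hψ_nonneg : ∀ t, 0 ≤ ψ t) (hψ_even : ∀ t, ψ (-t) = ψ t)
    (hψ_bdd : ∃ M, ∀ t, ψ t ≤ M)
    (hψ_supp_ne : (Function.support ψ).Nonempty)
    (hψ_supp : Function.support ψ ⊆ Set.Icc (-1) 1)
    -- exponent
    (α : ℝ) (hα : α < d) :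
    ∀ x ∈ Ω,
      ((1 + κ1 * δ)⁻¹ * ∫ z in Metric.ball (0 : Rd d) 1, ψ ‖z‖ * ‖z‖ ^ (-α)
          ≤ ∫ y in Ω, psiDA δ α q lam ψ y x) ∧
      (∫ y in Ω, psiDA δ α q lam ψ y x
          ≤ (1 - κ1 * δ)⁻¹ * ∫ z in Metric.ball (0 : Rd d) 1, ψ ‖z‖ * ‖z‖ ^ (-α)) :=
  statement_2_general hd Ω hΩo hΩb lam κ0 κ1 hκ0 hκ1 hlam_nonneg hlam_lb hlam_ub hlam_lip q Cq hq_C1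
    hq_pos hq_deriv hCq hq_dbl δ hδ hδ0 ψ hψ_nonneg hψ_supp α
end
end

section
/- Weighted integral estimate for the x-gradient of the adjoint kernel: Assume ψ satisfies (A_ψ) and is C¹. For x, y ∈ Ω write ψ_δ(y,x) := η_δ(y)^{−d}·ψ(|x−y|/η_δ(y)). Then for every α ∈ ℝ there exists a constant C = C(d, ψ, κ₁, α) > 0 such that for all x ∈ Ω, ∫_Ω η_δ(y)^α·|∇_x ψ_δ(y,x)| dy ≤ C·η_δ(x)^{α−1}, where ∇_x denotes the gradient with respect to the variable x. -/
/-! The `x`-gradient of `ψ_δ(y, ·)` vanishes unless `|x - y| < η_δ(y)`, and is then at most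
`Lip(ψ) η_δ(y)^{-d-1}`. Since `η_δ` is `1/3`-Lipschitz, such `y` lie in `B(x, 2η_δ(x))` and satisfy
`η_δ(x)/2 ≤ η_δ(y) ≤ 2η_δ(x)`. So the integrand is `≲ η_δ(x)^{α-d-1}` on a ball of volume
`≲ η_δ(x)^d`. -/

open MeasureTheory Real Set Filter Metric
open scoped ENNReal NNReal Topology RealInnerProductSpace

noncomputable section

/-- Boundary-localized mollifier kernel `ψ_δ(y,x)` (localization in the first argument). -/
def psiAdj {d : ℕ} (δ : ℝ) (q : ℝ → ℝ) (lam : Rd d → ℝ) (ψ : ℝ → ℝ) (y x : Rd d) : ℝ :=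
  (etaD δ q lam y) ^ (-(d : ℝ)) * ψ (‖x - y‖ / etaD δ q lam y)

theorem rpow_le_two_rpow_abs_mul {a b : ℝ} (ha : 0 < a) (hb : 0 < b) (hab : a ≤ 2 * b)
    (hba : b ≤ 2 * a) (β : ℝ) : a ^ β ≤ 2 ^ |β| * b ^ β := by
  rcases le_or_gt 0 β with hβ | hβ
  · calc a ^ β ≤ (2 * b) ^ β := by gcongr
      _ = 2 ^ |β| * b ^ β := by rw [abs_of_nonneg hβ, mul_rpow zero_le_two hb.le]
  · calc a ^ β ≤ (2⁻¹ * b) ^ β := rpow_le_rpow_of_nonpos (by positivity) (by linarith) hβ.le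
      _ = 2 ^ |β| * b ^ β := by
        rw [abs_of_neg hβ, mul_rpow (by norm_num) hb.le, inv_rpow zero_le_two,
          ← rpow_neg zero_le_two]

section Kernel

variable {E : Type*} [NormedAddCommGroup E] [InnerProductSpace ℝ E] [CompleteSpace E]

theorem norm_gradient_le_of_lipschitzWith {f : E → ℝ} {K : ℝ≥0} (hf : LipschitzWith K f) (x : E) :
    ‖gradient f x‖ ≤ K := by
  rw [gradient, LinearIsometryEquiv.norm_map]
  exact norm_fderiv_le_of_lipschitz ℝ hf

variable {ψ : ℝ → ℝ} {M : ℝ≥0}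

theorem norm_gradient_rescaled_le (hψ : LipschitzWith M ψ) {a : ℝ} (ha : 0 < a)
    (s : ℝ) (y x : E) :
    ‖gradient (fun x' => a ^ s * ψ (‖x' - y‖ / a)) x‖ ≤ a ^ s * M / a := by
  have has : 0 < a ^ s := rpow_pos_of_pos ha s
  refine norm_gradient_le_of_lipschitzWith (K := (a ^ s * M / a).toNNReal) ?_ x |>.trans_eq
    (Real.coe_toNNReal _ (by positivity))
  refine LipschitzWith.of_dist_le_mul fun u v => ?_
  rw [Real.coe_toNNReal _ (by positivity), Real.dist_eq, dist_eq_norm, ← mul_sub, abs_mul,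
    abs_of_pos has]
  have hdist : |‖u - y‖ / a - ‖v - y‖ / a| ≤ ‖u - v‖ / a := by
    rw [← sub_div, abs_div, abs_of_pos ha]
    gcongr
    simpa using abs_norm_sub_norm_le (u - y) (v - y)
  calc a ^ s * |ψ (‖u - y‖ / a) - ψ (‖v - y‖ / a)|
      ≤ a ^ s * (M * |‖u - y‖ / a - ‖v - y‖ / a|) := by
        gcongr
        simpa only [Real.dist_eq] using hψ.dist_le_mul (‖u - y‖ / a) (‖v - y‖ / a)
    _ ≤ a ^ s * (M * (‖u - v‖ / a)) := by gcongr
    _ = a ^ s * M / a * ‖u - v‖ := by ring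

theorem gradient_rescaled_eq_zero (hψ : tsupport ψ ⊆ Ioo (-1) 1) {a : ℝ} (ha : 0 ≤ a) (s : ℝ)
    {y x : E} (hxy : a ≤ ‖x - y‖) :
    gradient (fun x' => a ^ s * ψ (‖x' - y‖ / a)) x = 0 := by
  rcases ha.eq_or_lt with rfl | ha
  · -- `t / 0 = 0`, so the kernel is constant
    simp only [div_zero, gradient_fun_const]
  have hcont : Continuous fun x' : E => ‖x' - y‖ / a := by fun_prop
  have hx : x ∈ (fun x' : E => ‖x' - y‖ / a) ⁻¹' (tsupport ψ)ᶜ := fun hx =>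
    ((one_le_div ha).mpr hxy).not_gt (hψ hx).2
  have hzero : (fun x' => a ^ s * ψ (‖x' - y‖ / a)) =ᶠ[𝓝 x] fun _ => 0 := by
    filter_upwards [((isClosed_tsupport ψ).isOpen_compl.preimage hcont).mem_nhds hx] with x' hx'
    rw [image_eq_zero_of_notMem_tsupport hx', mul_zero]
  rw [hzero.gradient_eq, gradient_fun_const]

variable {η : E → ℝ}

theorem rpow_mul_norm_gradient_le_indicator (hψ : LipschitzWith M ψ)
    (hψ_supp : tsupport ψ ⊆ Ioo (-1) 1) {x y : E} (hx : 0 ≤ η x) (hy : 0 ≤ η y)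
    (hxy : |η x - η y| ≤ ‖x - y‖ / 3) (α : ℝ) (d : ℕ) :
    η y ^ α * ‖gradient (fun x' => η y ^ (-(d : ℝ)) * ψ (‖x' - y‖ / η y)) x‖ ≤
      (ball x (2 * η x)).indicator (fun _ => M * 2 ^ |α - d - 1| * η x ^ (α - d - 1)) y := by
  by_cases hnear : ‖x - y‖ < η y
  swap
  · rw [gradient_rescaled_eq_zero hψ_supp hy _ (not_lt.mp hnear), norm_zero, mul_zero]
    exact indicator_nonneg (fun _ _ => by positivity) y
  have hy : 0 < η y := (norm_nonneg _).trans_lt hnear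
  obtain ⟨hlo, hhi⟩ := abs_le.mp hxy
  have hx : 0 < η x := by linarith
  have hball : y ∈ ball x (2 * η x) := by
    rw [mem_ball, dist_comm, dist_eq_norm]
    linarith
  rw [indicator_of_mem hball]
  calc η y ^ α * ‖gradient (fun x' => η y ^ (-(d : ℝ)) * ψ (‖x' - y‖ / η y)) x‖
      ≤ η y ^ α * (η y ^ (-(d : ℝ)) * M / η y) := by
        gcongr
        exact norm_gradient_rescaled_le hψ hy _ y x
    _ = M * η y ^ (α - d - 1) := by
        rw [rpow_sub hy, rpow_sub hy, rpow_neg hy.le, rpow_one]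
        field_simp
    _ ≤ M * (2 ^ |α - d - 1| * η x ^ (α - d - 1)) := by
        gcongr
        exact rpow_le_two_rpow_abs_mul hy hx (by linarith) (by linarith) _
    _ = M * 2 ^ |α - d - 1| * η x ^ (α - d - 1) := by ring

variable [FiniteDimensional ℝ E] [MeasurableSpace E] [BorelSpace E]

theorem setIntegral_rpow_mul_norm_gradient_le (μ : Measure E) [μ.IsAddHaarMeasure] {d : ℕ}
    (hd : Module.finrank ℝ E = d) (hψ : LipschitzWith M ψ) (hψ_supp : tsupport ψ ⊆ Ioo (-1) 1)
    {Ω : Set E} (hΩ : MeasurableSet Ω) (hη : ∀ y ∈ Ω, 0 ≤ η y) {x : E} (hx : 0 ≤ η x)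
    (hη_lip : ∀ y ∈ Ω, |η x - η y| ≤ ‖x - y‖ / 3) (α : ℝ) :
    ∫ y in Ω, η y ^ α * ‖gradient (fun x' => η y ^ (-(d : ℝ)) * ψ (‖x' - y‖ / η y)) x‖ ∂μ ≤
      M * 2 ^ |α - d - 1| * 2 ^ d * μ.real (ball 0 1) * η x ^ (α - 1) := by
  set c : ℝ := M * 2 ^ |α - d - 1| * η x ^ (α - d - 1)
  set g : E → ℝ := (ball x (2 * η x)).indicator fun _ => c
  have hg_nonneg : 0 ≤ g := indicator_nonneg fun _ _ => by positivity
  have hg_int : Integrable g μ :=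
    (integrableOn_const measure_ball_lt_top.ne).integrable_indicator measurableSet_ball
  have hbound : ∫ y in Ω, η y ^ α *
      ‖gradient (fun x' => η y ^ (-(d : ℝ)) * ψ (‖x' - y‖ / η y)) x‖ ∂μ ≤
        μ.real (ball x (2 * η x)) * c := by
    calc _ ≤ ∫ y in Ω, g y ∂μ := integral_mono_of_nonneg
            (ae_restrict_of_forall_mem hΩ fun y hy =>
              mul_nonneg (rpow_nonneg (hη y hy) _) (norm_nonneg _)) hg_int.restrict
            (ae_restrict_of_forall_mem hΩ fun y hy =>
              rpow_mul_norm_gradient_le_indicator hψ hψ_supp hx (hη y hy) (hη_lip y hy) α d)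
      _ ≤ ∫ y, g y ∂μ := setIntegral_le_integral hg_int (ae_of_all _ hg_nonneg)
      _ = μ.real (ball x (2 * η x)) * c := by
        rw [integral_indicator_const _ measurableSet_ball, smul_eq_mul]
  rcases hx.eq_or_lt with hx0 | hx
  · rw [← hx0, mul_zero, ball_zero, measureReal_empty, zero_mul] at hbound
    exact hbound.trans (by positivity)
  rw [measureReal_def, Measure.addHaar_ball_of_pos μ x (by positivity), ENNReal.toReal_mul,
    ENNReal.toReal_ofReal (by positivity), ← measureReal_def, hd] at hbound
  refine hbound.trans_eq ?_
  rw [show α - 1 = α - d - 1 + d by ring, rpow_add_natCast hx.ne']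
  ring

end Kernel

theorem abs_etaD_sub_le {d : ℕ} {δ κ : ℝ} {q : ℝ → ℝ} {lam : Rd d → ℝ} {s : Set (Rd d)}
    (hδ : 0 ≤ δ) (hq : ∀ a b, 0 ≤ a → 0 ≤ b → |q a - q b| ≤ |a - b|)
    (hlam : ∀ x ∈ s, 0 ≤ lam x) (hlam_lip : ∀ x ∈ s, ∀ y ∈ s, |lam x - lam y| ≤ κ * ‖x - y‖)
    {x y : Rd d} (hx : x ∈ s) (hy : y ∈ s) :
    |etaD δ q lam x - etaD δ q lam y| ≤ δ * κ * ‖x - y‖ := by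
  rw [etaD, etaD, ← mul_sub, abs_mul, abs_of_nonneg hδ, mul_assoc]
  gcongr
  exact (hq _ _ (hlam x hx) (hlam y hy)).trans (hlam_lip x hx y hy)

theorem statement_3_general {d : ℕ}
    (Ω : Set (Rd d)) (hΩo : IsOpen Ω)
    -- (A_λ)
    (lam : Rd d → ℝ) (κ0 κ1 : ℝ)
    (hlam_nonneg : ∀ x ∈ closure Ω, 0 ≤ lam x)
    (hlam_lip : ∀ x ∈ Ω, ∀ y ∈ Ω, |lam x - lam y| ≤ κ1 * ‖x - y‖)
    -- (A_q)
    (q : ℝ → ℝ) (Cq : ℝ) (hq_C1 : ContDiff ℝ 1 q) (hq0 : q 0 = 0)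
    (hq_pos : ∀ r : ℝ, 0 < r → 0 < q r ∧ q r ≤ r)
    (hq_deriv : ∀ r : ℝ, 0 ≤ r → 0 ≤ deriv q r ∧ deriv q r ≤ 1)
    -- (A_ψ) with ψ of class C¹
    (ψ : ℝ → ℝ)
    (hψ_C1 : ContDiff ℝ 1 ψ)
    (hψ_supp2 : tsupport ψ ⊆ Set.Ioo (-1) 1)
    -- exponent
    (α : ℝ) :
    -- conclusion: C = C(d, ψ, κ₁, α), uniform in δ and x
    ∃ C > 0, ∀ δ : ℝ, 0 < δ →
      δ < 1 / (3 * max 1 (max κ1 (Cq * κ0 ^ Real.logb 2 Cq))) →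
      ∀ x ∈ Ω,
        (∫ y in Ω, (etaD δ q lam y) ^ α *
            ‖gradient (fun x' : Rd d => psiAdj δ q lam ψ y x') x‖)
          ≤ C * (etaD δ q lam x) ^ (α - 1) := by
  obtain ⟨M, hψ_lip⟩ := hψ_C1.lipschitzWith_of_hasCompactSupport
    (isCompact_Icc.of_isClosed_subset (isClosed_tsupport ψ) (hψ_supp2.trans Ioo_subset_Icc_self))
    one_ne_zero
  have hM : (0 : ℝ) < max M 1 := lt_max_of_lt_right one_pos
  have hvol : 0 < volume.real (ball (0 : Rd d) 1) :=
    ENNReal.toReal_pos (measure_ball_pos volume 0 one_pos).ne' measure_ball_lt_top.ne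
  refine ⟨max M 1 * 2 ^ |α - d - 1| * 2 ^ d * volume.real (ball (0 : Rd d) 1), by positivity,
    fun δ hδ hδ_lt x hx => ?_⟩
  have hδκ1 : δ * κ1 ≤ 1 / 3 := by
    rw [lt_div_iff₀ (by positivity)] at hδ_lt
    nlinarith [le_max_left κ1 (Cq * κ0 ^ logb 2 Cq), le_max_right 1 (max κ1 (Cq * κ0 ^ logb 2 Cq))]
  have hq_nonneg : ∀ r, 0 ≤ r → 0 ≤ q r := fun r hr =>
    hr.eq_or_lt.elim (fun h => h ▸ hq0.ge) fun h => (hq_pos r h).1.le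
  have hq_lip : ∀ a b, 0 ≤ a → 0 ≤ b → |q a - q b| ≤ |a - b| := fun a b ha hb => by
    simpa using (convex_Ici 0).norm_image_sub_le_of_norm_deriv_le
      (fun r _ => (hq_C1.differentiable one_ne_zero).differentiableAt)
      (fun r hr => abs_le.mpr ⟨by linarith [(hq_deriv r hr).1], (hq_deriv r hr).2⟩) hb ha
  have hlam : ∀ y ∈ Ω, 0 ≤ lam y := fun y hy => hlam_nonneg y (subset_closure hy)
  have hη : ∀ y ∈ Ω, 0 ≤ etaD δ q lam y := fun y hy =>
    mul_nonneg hδ.le (hq_nonneg _ (hlam y hy))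
  have hη_lip : ∀ y ∈ Ω, |etaD δ q lam x - etaD δ q lam y| ≤ ‖x - y‖ / 3 := fun y hy =>
    (abs_etaD_sub_le hδ.le hq_lip hlam hlam_lip hx hy).trans (by nlinarith [norm_nonneg (x - y)])
  exact setIntegral_rpow_mul_norm_gradient_le volume finrank_euclideanSpace_fin
    (hψ_lip.weaken (le_max_left M 1)) hψ_supp2 hΩo.measurableSet hη (hη x hx) hη_lip α

/-- weighted integral estimate for the `x`-gradient of the adjoint kernel. -/
theorem statement_3 {d : ℕ} (hd : 1 ≤ d)
    (Ω : Set (Rd d)) (hΩo : IsOpen Ω) (hΩne : Ω.Nonempty)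
    (hΩb : Bornology.IsBounded Ω) (hΩc : IsConnected Ω)
    -- (A_λ)
    (lam : Rd d → ℝ) (κ0 κ1 : ℝ) (hκ0 : 1 ≤ κ0) (hκ1 : 0 < κ1)
    (hlam_nonneg : ∀ x ∈ closure Ω, 0 ≤ lam x)
    (hlam_lb : ∀ x ∈ closure Ω, κ0⁻¹ * Metric.infDist x (frontier Ω) ≤ lam x)
    (hlam_ub : ∀ x ∈ closure Ω, lam x ≤ κ0 * Metric.infDist x (frontier Ω))
    (hlam_lip : ∀ x ∈ Ω, ∀ y ∈ Ω, |lam x - lam y| ≤ κ1 * ‖x - y‖)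
    -- (A_q)
    (q : ℝ → ℝ) (Cq cq : ℝ) (hq_C1 : ContDiff ℝ 1 q) (hq0 : q 0 = 0)
    (hq_pos : ∀ r : ℝ, 0 < r → 0 < q r ∧ q r ≤ r)
    (hq_deriv : ∀ r : ℝ, 0 ≤ r → 0 ≤ deriv q r ∧ deriv q r ≤ 1)
    (hcq : 0 < cq) (hq_deriv_pos : ∀ r ∈ Set.Ioc (0:ℝ) cq, 0 < deriv q r)
    (hCq : 1 ≤ Cq) (hq_dbl : ∀ r : ℝ, 0 < r → q (2 * r) ≤ Cq * q r)
    -- (A_ψ) with ψ of class C¹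
    (ψ : ℝ → ℝ) (cψ : ℝ) (hcψ : 0 < cψ)
    (hψ_nonneg : ∀ t, 0 ≤ ψ t) (hψ_even : ∀ t, ψ (-t) = ψ t)
    (hψ_C1 : ContDiff ℝ 1 ψ)
    (hψ_supp1 : Set.Icc (-cψ) cψ ⊆ tsupport ψ)
    (hψ_supp2 : tsupport ψ ⊆ Set.Ioo (-1) 1)
    (hψ_norm : ∫ x : Rd d, ψ ‖x‖ = 1)
    -- exponent
    (α : ℝ) :
    -- conclusion: C = C(d, ψ, κ₁, α), uniform in δ and x
    ∃ C > 0, ∀ δ : ℝ, 0 < δ →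
      δ < 1 / (3 * max 1 (max κ1 (Cq * κ0 ^ Real.logb 2 Cq))) →
      ∀ x ∈ Ω,
        (∫ y in Ω, (etaD δ q lam y) ^ α *
            ‖gradient (fun x' : Rd d => psiAdj δ q lam ψ y x') x‖)
          ≤ C * (etaD δ q lam x) ^ (α - 1) :=
  statement_3_general Ω hΩo lam κ0 κ1 hlam_nonneg hlam_lip q Cq hq_C1 hq0 hq_pos hq_deriv ψ hψ_C1
    hψ_supp2 α
end
end

section
/- Finiteness of the reversed-kernel boundary integral: In the special Lipschitz epigraph setting, for any u, v ∈ C²_b(ℝ^d) and any 0 < ε ≪ min{δ, ϱ}, ∫_{U_ε} ∫_{U^ε} ρ^ε_{δ,β−p}(y,x)·Φ_p′(∇u(x)·(x−y)/|x−y|)·(v(x)/|x−y|) dy dx ≤ C·‖∇u‖_{L^∞}^{p−1}·‖v‖_{L^∞}/ε², where C does not depend on ε. -/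
open MeasureTheory Real Set Filter Metric
open scoped ENNReal NNReal Topology RealInnerProductSpace

noncomputable section

/-- The point `(x', t) ∈ ℝ^{m}×ℝ = ℝ^{m+1}`. -/
def pt {m : ℕ} (x' : Rd m) (t : ℝ) : Rd (m+1) :=
  (EuclideanSpace.equiv (Fin (m+1)) ℝ).symm
    (Fin.snoc ((EuclideanSpace.equiv (Fin m) ℝ) x') t)

/-- The horizontal part `x'` of `x = (x', x_d) ∈ ℝ^{m+1}`. -/
def fst' {m : ℕ} (z : Rd (m+1)) : Rd m :=
  (EuclideanSpace.equiv (Fin m) ℝ).symm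
    (Fin.init ((EuclideanSpace.equiv (Fin (m+1)) ℝ) z))

/-- The vertical part `x_d` of `x = (x', x_d) ∈ ℝ^{m+1}`. -/
def lastc {m : ℕ} (z : Rd (m+1)) : ℝ := z (Fin.last m)

/-- The kernel `ρ_{δ,β−p}(x,y)`. -/
def rhoKer {d : ℕ} (δ β p : ℝ) (ρ q : ℝ → ℝ) (lam : Rd d → ℝ) (x y : Rd d) : ℝ :=
  (etaD δ q lam x) ^ (-(d : ℝ)) * ρ (‖y - x‖ / etaD δ q lam x) *
    (‖y - x‖ / etaD δ q lam x) ^ (p - β)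

open Classical in
/-- The truncated kernel `ρ^ε_{δ,β−p}(x,y)`. -/
def rhoKerEps {d : ℕ} (ε δ β p : ℝ) (ρ q : ℝ → ℝ) (lam : Rd d → ℝ) (x y : Rd d) : ℝ :=
  if ε ≤ ‖y - x‖ / etaD δ q lam x ∧ ‖y - x‖ / etaD δ q lam x < 1 then
    rhoKer δ β p ρ q lam x y else 0

/-!
If `ρ^ε(y, x) ≠ 0` with `x ∈ U_ε` and `y ∈ U^ε`, then `λ(y) ≥ ε / (κ₀ (1 + M))`, so
`|x - y| ≥ ε η_δ(y) ≥ τ := ε δ q(ε / (κ₀ (1 + M)))`; and since `|x - y| < η_δ(y) ≤ δ λ(y)` with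
`δ κ₁ < 1/3`, the Lipschitz bound on `λ` gives `λ(y) ≤ 2 κ₀ ε`, so `η_δ(y) ≤ η⁺ := δ q(2 κ₀ ε)` and
`x` lies within `(1 + M) η⁺` of the top of `U_ε`. The integrand is `O(|x - y|^{-(d+1)})`, so for
each such `x` the inner integral is `O(1/τ)`, while those `x` fill a set of volume `O(η⁺)`. The
doubling of `q` bounds `η⁺ / (δ q(ε / (κ₀ (1 + M))))` independently of `ε`, and the total is
`O(1/ε) ≤ O(1/ε²)`.
-/

section Coordinates

variable {m : ℕ}

lemma fst'_apply (z : Rd (m+1)) (i : Fin m) : fst' z i = z i.castSucc := rfl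

lemma fst'_sub (z w : Rd (m+1)) : fst' (z - w) = fst' z - fst' w := rfl

lemma lastc_sub (z w : Rd (m+1)) : lastc (z - w) = lastc z - lastc w := rfl

lemma fst'_pt (x' : Rd m) (t : ℝ) : fst' (pt x' t) = x' := by
  ext i
  simp [fst'_apply, pt]

lemma lastc_pt (x' : Rd m) (t : ℝ) : lastc (pt x' t) = t := by
  simp [lastc, pt]

lemma norm_sq_eq_norm_fst'_sq_add_lastc_sq (z : Rd (m+1)) :
    ‖z‖ ^ 2 = ‖fst' z‖ ^ 2 + lastc z ^ 2 := by
  simp only [EuclideanSpace.real_norm_sq_eq, Fin.sum_univ_castSucc, fst'_apply, lastc]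

lemma norm_fst'_le (z : Rd (m+1)) : ‖fst' z‖ ≤ ‖z‖ :=
  (sq_le_sq₀ (norm_nonneg _) (norm_nonneg _)).mp <| by
    linarith [norm_sq_eq_norm_fst'_sq_add_lastc_sq z, sq_nonneg (lastc z)]

lemma abs_lastc_le (z : Rd (m+1)) : |lastc z| ≤ ‖z‖ :=
  abs_le_of_sq_le_sq (by linarith [norm_sq_eq_norm_fst'_sq_add_lastc_sq z, sq_nonneg ‖fst' z‖])
    (norm_nonneg _)

lemma norm_sub_pt_fst' (z : Rd (m+1)) (t : ℝ) : ‖z - pt (fst' z) t‖ = |lastc z - t| := by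
  rw [← sqrt_sq (norm_nonneg _), norm_sq_eq_norm_fst'_sq_add_lastc_sq, fst'_sub, lastc_sub,
    fst'_pt, lastc_pt, sub_self, norm_zero, sq, zero_mul, zero_add, sqrt_sq_eq_abs]

lemma dist_pt_pt (x' : Rd m) (s t : ℝ) : dist (pt x' s) (pt x' t) = |s - t| := by
  simpa [dist_eq_norm, fst'_pt, lastc_pt] using norm_sub_pt_fst' (pt x' s) t

lemma lipschitzWith_fst' : LipschitzWith 1 (fst' (m := m)) :=
  LipschitzWith.of_dist_le_mul fun z w => by
    simpa [dist_eq_norm, ← fst'_sub] using norm_fst'_le (z - w)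

lemma lipschitzWith_lastc : LipschitzWith 1 (lastc (m := m)) :=
  LipschitzWith.of_dist_le_mul fun z w => by
    simpa [dist_eq_norm, ← lastc_sub] using abs_lastc_le (z - w)

end Coordinates

section Epigraph

variable {m : ℕ} {φ : Rd m → ℝ}

def strictEpigraph (φ : Rd m → ℝ) : Set (Rd (m+1)) := {z | φ (fst' z) < lastc z}

def heightAbove (φ : Rd m → ℝ) (z : Rd (m+1)) : ℝ := lastc z - φ (fst' z)

lemma mem_strictEpigraph_iff {z : Rd (m+1)} : z ∈ strictEpigraph φ ↔ 0 < heightAbove φ z := by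
  rw [heightAbove, sub_pos]
  rfl

lemma isOpen_strictEpigraph (hφ : Continuous φ) : IsOpen (strictEpigraph φ) :=
  isOpen_lt (hφ.comp lipschitzWith_fst'.continuous) lipschitzWith_lastc.continuous

lemma heightAbove_pt (x' : Rd m) (t : ℝ) : heightAbove φ (pt x' t) = t - φ x' := by
  rw [heightAbove, fst'_pt, lastc_pt]

lemma pt_mem_frontier_strictEpigraph (hφ : Continuous φ) (x' : Rd m) :
    pt x' (φ x') ∈ frontier (strictEpigraph φ) := by
  rw [(isOpen_strictEpigraph hφ).frontier_eq]
  refine ⟨Metric.mem_closure_iff.mpr fun r hr => ⟨pt x' (φ x' + r / 2), ?_, ?_⟩, ?_⟩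
  · rw [mem_strictEpigraph_iff, heightAbove_pt]
    linarith
  · rw [dist_pt_pt, abs_of_nonpos (by linarith)]
    linarith
  · rw [mem_strictEpigraph_iff, heightAbove_pt, sub_self]
    exact lt_irrefl 0

lemma heightAbove_eq_zero_of_mem_frontier (hφ : Continuous φ) {z : Rd (m+1)}
    (hz : z ∈ frontier (strictEpigraph φ)) : heightAbove φ z = 0 := by
  have hcont : Continuous (heightAbove φ) :=
    lipschitzWith_lastc.continuous.sub (hφ.comp lipschitzWith_fst'.continuous)
  rw [(isOpen_strictEpigraph hφ).frontier_eq] at hz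
  have hle : 0 ≤ heightAbove φ z :=
    closure_minimal (fun w hw => (mem_strictEpigraph_iff.mp hw).le)
      (isClosed_le continuous_const hcont) hz.1
  exact le_antisymm (not_lt.mp (mt mem_strictEpigraph_iff.mpr hz.2)) hle

lemma lipschitzWith_heightAbove {K : ℝ≥0} (hφ : LipschitzWith K φ) :
    LipschitzWith (1 + K) (heightAbove φ) := by
  have := lipschitzWith_lastc.sub (hφ.comp lipschitzWith_fst')
  rwa [mul_one] at this

lemma abs_heightAbove_sub_le {K : ℝ≥0} (hφ : LipschitzWith K φ) (z w : Rd (m+1)) :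
    |heightAbove φ z - heightAbove φ w| ≤ (1 + K) * ‖z - w‖ := by
  simpa [Real.dist_eq, dist_eq_norm] using (lipschitzWith_heightAbove hφ).dist_le_mul z w

lemma infDist_frontier_le_heightAbove (hφ : Continuous φ) {z : Rd (m+1)}
    (hz : 0 ≤ heightAbove φ z) : infDist z (frontier (strictEpigraph φ)) ≤ heightAbove φ z :=
  calc infDist z (frontier (strictEpigraph φ))
      ≤ dist z (pt (fst' z) (φ (fst' z))) :=
        infDist_le_dist_of_mem (pt_mem_frontier_strictEpigraph hφ _)
    _ = heightAbove φ z := by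
        rw [dist_eq_norm, norm_sub_pt_fst']
        exact abs_of_nonneg hz

lemma heightAbove_le_mul_infDist_frontier {K : ℝ≥0} (hφ : LipschitzWith K φ) (z : Rd (m+1)) :
    heightAbove φ z ≤ (1 + K) * infDist z (frontier (strictEpigraph φ)) := by
  rw [← div_le_iff₀' (by positivity),
    le_infDist ⟨_, pt_mem_frontier_strictEpigraph hφ.continuous 0⟩]
  intro w hw
  rw [div_le_iff₀' (by positivity), dist_eq_norm]
  have := abs_heightAbove_sub_le hφ z w
  rw [heightAbove_eq_zero_of_mem_frontier hφ.continuous hw, sub_zero] at this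
  exact (le_abs_self _).trans this

end Epigraph

section KernelSupport

variable {m : ℕ} {φ : Rd m → ℝ} {K : ℝ≥0} {lam : Rd (m+1) → ℝ} {κ0 : ℝ}

lemma div_le_lam_of_mem_strictEpigraph (hφ : LipschitzWith K φ) (hκ0 : 0 < κ0)
    (hlam : ∀ x ∈ closure (strictEpigraph φ),
      κ0⁻¹ * infDist x (frontier (strictEpigraph φ)) ≤ lam x)
    {y : Rd (m+1)} (hy : y ∈ strictEpigraph φ) :
    heightAbove φ y / (κ0 * (1 + K)) ≤ lam y := by
  calc heightAbove φ y / (κ0 * (1 + K))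
      ≤ (1 + K) * infDist y (frontier (strictEpigraph φ)) / (κ0 * (1 + K)) :=
        div_le_div_of_nonneg_right (heightAbove_le_mul_infDist_frontier hφ y) (by positivity)
    _ = κ0⁻¹ * infDist y (frontier (strictEpigraph φ)) := by field_simp
    _ ≤ lam y := hlam y (subset_closure hy)

lemma lam_le_mul_heightAbove (hφ : Continuous φ) (hκ0 : 0 ≤ κ0)
    (hlam : ∀ x ∈ closure (strictEpigraph φ),
      lam x ≤ κ0 * infDist x (frontier (strictEpigraph φ)))
    {x : Rd (m+1)} (hx : x ∈ strictEpigraph φ) : lam x ≤ κ0 * heightAbove φ x :=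
  (hlam x (subset_closure hx)).trans <| mul_le_mul_of_nonneg_left
    (infDist_frontier_le_heightAbove hφ (mem_strictEpigraph_iff.mp hx).le) hκ0

/-- Assumption `(A_λ)`. -/
structure IsRegularizedDistance (φ : Rd m → ℝ) (lam : Rd (m+1) → ℝ) (κ0 κ1 : ℝ) : Prop where
  inv_mul_infDist_le : ∀ x ∈ closure (strictEpigraph φ),
    κ0⁻¹ * infDist x (frontier (strictEpigraph φ)) ≤ lam x
  le_mul_infDist : ∀ x ∈ closure (strictEpigraph φ),
    lam x ≤ κ0 * infDist x (frontier (strictEpigraph φ))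
  abs_sub_le : ∀ x ∈ strictEpigraph φ, ∀ y ∈ strictEpigraph φ, |lam x - lam y| ≤ κ1 * ‖x - y‖

/-- Since `δ κ1 < 1/3`, the Lipschitz bound gives `λ(y) ≤ (3/2) λ(x) ≤ (3/2) κ0 ε`. -/
lemma lam_le_two_mul_of_norm_sub_lt (hφ : Continuous φ) (hκ0 : 0 < κ0) {κ1 : ℝ} (hκ1 : 0 ≤ κ1)
    (hlam : IsRegularizedDistance φ lam κ0 κ1) {δ : ℝ} (hδκ1 : δ * κ1 < 1 / 3) {ε : ℝ}
    {x y : Rd (m+1)} (hx : x ∈ strictEpigraph φ) (hy : y ∈ strictEpigraph φ)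
    (hxε : heightAbove φ x ≤ ε) (hy0 : 0 ≤ lam y) (hxy : ‖x - y‖ < δ * lam y) :
    lam y ≤ 2 * κ0 * ε := by
  have hlam_x : lam x ≤ κ0 * ε :=
    (lam_le_mul_heightAbove hφ hκ0.le hlam.le_mul_infDist hx).trans
      (mul_le_mul_of_nonneg_left hxε hκ0.le)
  have hlip := (le_abs_self _).trans (hlam.abs_sub_le y hy x hx)
  rw [norm_sub_rev] at hlip
  have h1 : κ1 * ‖x - y‖ ≤ κ1 * (δ * lam y) := mul_le_mul_of_nonneg_left hxy.le hκ1
  have h2 : δ * κ1 * lam y ≤ 1 / 3 * lam y := mul_le_mul_of_nonneg_right hδκ1.le hy0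
  nlinarith [mul_nonneg hκ0.le ((mem_strictEpigraph_iff.mp hx).le.trans hxε)]

/-- Both bounds come from `δ q(ε / (κ0 (1 + K))) ≤ η_δ(y) ≤ δ q(2 κ0 ε)` on the support. -/
lemma le_norm_sub_and_sub_lt_heightAbove (hφ : LipschitzWith K φ) (hκ0 : 0 < κ0)
    {κ1 : ℝ} (hκ1 : 0 ≤ κ1) (hlam : IsRegularizedDistance φ lam κ0 κ1)
    {q : ℝ → ℝ} (hq_mono : MonotoneOn q (Ici 0)) (hq : ∀ r : ℝ, 0 < r → 0 < q r ∧ q r ≤ r)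
    {δ : ℝ} (hδ : 0 < δ) (hδκ1 : δ * κ1 < 1 / 3) {ε β p : ℝ} {ρ : ℝ → ℝ} (hε : 0 < ε)
    {x y : Rd (m+1)} (hx : x ∈ strictEpigraph φ) (hxε : heightAbove φ x < ε)
    (hyε : ε < heightAbove φ y) (hxy : rhoKerEps ε δ β p ρ q lam y x ≠ 0) :
    ε * (δ * q (ε / (κ0 * (1 + K)))) ≤ ‖x - y‖ ∧
      ε - (1 + K) * (δ * q (2 * κ0 * ε)) < heightAbove φ x := by
  have hsupp : ε ≤ ‖x - y‖ / etaD δ q lam y ∧ ‖x - y‖ / etaD δ q lam y < 1 := by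
    by_contra h
    exact hxy (if_neg h)
  have hy : y ∈ strictEpigraph φ := mem_strictEpigraph_iff.mpr (hε.trans hyε)
  have hr : 0 < ε / (κ0 * (1 + K)) := by positivity
  have hlam_y : ε / (κ0 * (1 + K)) ≤ lam y :=
    (div_le_div_of_nonneg_right hyε.le (by positivity)).trans
      (div_le_lam_of_mem_strictEpigraph hφ hκ0 hlam.inv_mul_infDist_le hy)
  have hlam_y0 : 0 ≤ lam y := hr.le.trans hlam_y
  have hη_lb : δ * q (ε / (κ0 * (1 + K))) ≤ etaD δ q lam y :=
    mul_le_mul_of_nonneg_left (hq_mono hr.le hlam_y0 hlam_y) hδ.le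
  have hη : 0 < etaD δ q lam y := (mul_pos hδ (hq _ hr).1).trans_le hη_lb
  have hdist_lb : ε * etaD δ q lam y ≤ ‖x - y‖ := (le_div_iff₀ hη).mp hsupp.1
  have hdist_ub : ‖x - y‖ < etaD δ q lam y := (div_lt_one hη).mp hsupp.2
  have hη_le : etaD δ q lam y ≤ δ * lam y :=
    mul_le_mul_of_nonneg_left (hq _ (hr.trans_le hlam_y)).2 hδ.le
  have hlam_y_ub : lam y ≤ 2 * κ0 * ε :=
    lam_le_two_mul_of_norm_sub_lt hφ.continuous hκ0 hκ1 hlam hδκ1 hx hy hxε.le hlam_y0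
      (hdist_ub.trans_le hη_le)
  have hη_ub : etaD δ q lam y ≤ δ * q (2 * κ0 * ε) :=
    mul_le_mul_of_nonneg_left
      (hq_mono hlam_y0 (by positivity : (0 : ℝ) ≤ 2 * κ0 * ε) hlam_y_ub) hδ.le
  refine ⟨(mul_le_mul_of_nonneg_left hη_lb hε.le).trans hdist_lb, ?_⟩
  have hheight := (le_abs_self _).trans (abs_heightAbove_sub_le hφ y x)
  rw [norm_sub_rev] at hheight
  nlinarith [mul_le_mul_of_nonneg_left (hdist_ub.le.trans hη_ub) (by positivity : (0 : ℝ) ≤ 1 + K)]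

end KernelSupport

lemma volume_band {m : ℕ} {φ : Rd m → ℝ} (hφ : Continuous φ) (R a b : ℝ) :
    volume {z : Rd (m+1) | (∀ i, |fst' z i| < R) ∧
        φ (fst' z) + a < lastc z ∧ lastc z < φ (fst' z) + b}
      = ENNReal.ofReal (b - a) * ENNReal.ofReal (2 * R) ^ m := by
  let F : Rd (m+1) → (Fin m → ℝ) × ℝ := fun z =>
    (MeasurableEquiv.piFinSuccAbove (fun _ => ℝ) (Fin.last m)
      ((MeasurableEquiv.toLp 2 (Fin (m+1) → ℝ)).symm z)).swap
  have hF : MeasurePreserving F volume volume := by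
    rw [Measure.volume_eq_prod]
    exact Measure.measurePreserving_swap.comp ((volume_preserving_piFinSuccAbove _ _).comp
      (EuclideanSpace.volume_preserving_symm_measurableEquiv_toLp _))
  let cube : Set (Fin m → ℝ) := {w | ∀ i, |w i| < R}
  have hcube : cube = univ.pi fun _ => Ioo (-R) R := by
    ext w
    simp [cube, abs_lt]
  have hcube_meas : MeasurableSet cube := hcube ▸ .univ_pi fun _ => measurableSet_Ioo
  let ψ : (Fin m → ℝ) → ℝ := fun w => φ (WithLp.toLp 2 w)
  have hψ : Measurable ψ := (hφ.comp (PiLp.continuous_toLp 2 _)).measurable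
  have hpre : {z : Rd (m+1) | (∀ i, |fst' z i| < R) ∧
      φ (fst' z) + a < lastc z ∧ lastc z < φ (fst' z) + b}
      = F ⁻¹' regionBetween (fun w => ψ w + a) (fun w => ψ w + b) cube := by
    ext z
    simp only [fst'_apply, lastc, mem_ofPred_eq, MeasurableEquiv.toLp_symm_apply,
      MeasurableEquiv.piFinSuccAbove_apply, Fin.insertNthEquiv_last, Fin.snocEquiv_symm_apply,
      Prod.swap_prod_mk, regionBetween, mem_Ioo, preimage_ofPred_eq, F, cube, ψ]
    rfl
  rw [hpre, hF.measure_preimage (measurableSet_regionBetween (hψ.add_const _) (hψ.add_const _)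
      hcube_meas).nullMeasurableSet, Measure.volume_eq_prod,
    volume_regionBetween_eq_lintegral' (hψ.add_const _) (hψ.add_const _) hcube_meas]
  simp only [Pi.sub_apply, add_sub_add_left_eq_sub, setLIntegral_const, hcube, volume_pi_pi,
    Real.volume_Ioo, Finset.prod_const, Finset.card_univ, Fintype.card_fin, sub_neg_eq_add,
    two_mul]

lemma setIntegral_le_measureReal_mul {α : Type*} [MeasurableSpace α] {μ : Measure α}
    {S W : Set α} {f : α → ℝ} {B : ℝ} (hS : MeasurableSet S) (hW : MeasurableSet W)
    (hWμ : μ W ≠ ∞) (hB : 0 ≤ B) (hf : ∀ x ∈ S, f x ≤ W.indicator (fun _ => B) x) :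
    ∫ x in S, f x ∂μ ≤ μ.real W * B := by
  by_cases hint : IntegrableOn f S μ
  · have hind : IntegrableOn (W.indicator fun _ => B) S μ :=
      ((integrable_indicator_iff hW).mpr (integrableOn_const hWμ)).integrableOn
    calc ∫ x in S, f x ∂μ ≤ ∫ x in S, W.indicator (fun _ => B) x ∂μ :=
          setIntegral_mono_on hint hind hS hf
      _ = μ.real (S ∩ W) * B := by rw [setIntegral_indicator hW, setIntegral_const, smul_eq_mul]
      _ ≤ μ.real W * B := mul_le_mul_of_nonneg_right (measureReal_mono inter_subset_right hWμ) hB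
  · rw [integral_undef hint]
    positivity

lemma rpow_neg_le_two_rpow_mul {s τ r : ℝ} (hs : 0 ≤ s) (hτ : 0 < τ) (hr : τ ≤ r) :
    r ^ (-s) ≤ 2 ^ s * τ ^ (-s) * (1 + r / τ) ^ (-s) := by
  have h1 : 1 ≤ r / τ := (one_le_div hτ).mpr hr
  calc r ^ (-s) = τ ^ (-s) * (r / τ) ^ (-s) := by
        rw [← mul_rpow hτ.le (by positivity), mul_div_cancel₀ _ hτ.ne']
    _ ≤ τ ^ (-s) * ((1 + r / τ) / 2) ^ (-s) :=
        mul_le_mul_of_nonneg_left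
          (rpow_le_rpow_of_nonpos (by positivity) (by linarith) (neg_nonpos.mpr hs)) (by positivity)
    _ = 2 ^ s * τ ^ (-s) * (1 + r / τ) ^ (-s) := by
        rw [div_rpow (by positivity) zero_le_two, rpow_neg zero_le_two, div_inv_eq_mul]
        ring

section TailIntegral

variable {E : Type*} [NormedAddCommGroup E] [NormedSpace ℝ E] [FiniteDimensional ℝ E]
  [MeasurableSpace E] [BorelSpace E] (μ : Measure E) [μ.IsAddHaarMeasure]

lemma integrable_one_add_norm_sub_div_rpow {s : ℝ} (hs : (Module.finrank ℝ E : ℝ) < s)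
    {τ : ℝ} (hτ : 0 < τ) (x : E) :
    Integrable (fun y => (1 + ‖y - x‖ / τ) ^ (-s)) μ := by
  simp_rw [div_eq_inv_mul, ← norm_smul_of_nonneg (inv_nonneg.mpr hτ.le)]
  exact ((integrable_comp_smul_iff μ (fun z : E => (1 + ‖z‖) ^ (-s)) (inv_ne_zero hτ.ne')).mpr
    (integrable_one_add_norm hs)).comp_sub_right x

lemma integral_one_add_norm_sub_div_rpow (s : ℝ) {τ : ℝ} (hτ : 0 ≤ τ) (x : E) :
    ∫ y, (1 + ‖y - x‖ / τ) ^ (-s) ∂μ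
      = τ ^ Module.finrank ℝ E * ∫ z, (1 + ‖z‖) ^ (-s) ∂μ := by
  simp_rw [div_eq_inv_mul, ← norm_smul_of_nonneg (inv_nonneg.mpr hτ)]
  rw [integral_sub_right_eq_self (fun z => (1 + ‖τ⁻¹ • z‖) ^ (-s)) x,
    Measure.integral_comp_inv_smul_of_nonneg μ (fun z => (1 + ‖z‖) ^ (-s)) hτ, smul_eq_mul]

lemma setIntegral_le_of_norm_le_rpow {s : ℝ} (hs : (Module.finrank ℝ E : ℝ) < s)
    {τ L : ℝ} (hτ : 0 < τ) (hL : 0 ≤ L) {x : E} {S : Set E} (hS : MeasurableSet S)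
    {g : E → ℝ} (hsupp : ∀ y ∈ S, g y ≠ 0 → τ ≤ ‖y - x‖)
    (hg : ∀ y ∈ S, ‖g y‖ ≤ L * ‖y - x‖ ^ (-s)) :
    ∫ y in S, g y ∂μ
      ≤ 2 ^ s * L * τ ^ ((Module.finrank ℝ E : ℝ) - s) * ∫ z, (1 + ‖z‖) ^ (-s) ∂μ := by
  have hs0 : 0 ≤ s := (Nat.cast_nonneg _).trans hs.le
  let h : E → ℝ := fun y => 2 ^ s * L * τ ^ (-s) * (1 + ‖y - x‖ / τ) ^ (-s)
  have hint : Integrable h μ := (integrable_one_add_norm_sub_div_rpow μ hs hτ x).const_mul _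
  have hgh : ∀ y ∈ S, ‖g y‖ ≤ h y := by
    intro y hy
    by_cases hgy : g y = 0
    · rw [hgy, norm_zero]
      positivity
    · calc ‖g y‖ ≤ L * ‖y - x‖ ^ (-s) := hg y hy
        _ ≤ L * (2 ^ s * τ ^ (-s) * (1 + ‖y - x‖ / τ) ^ (-s)) :=
          mul_le_mul_of_nonneg_left (rpow_neg_le_two_rpow_mul hs0 hτ (hsupp y hy hgy)) hL
        _ = h y := by ring
  calc ∫ y in S, g y ∂μ ≤ ∫ y in S, ‖g y‖ ∂μ := (Real.le_norm_self _).trans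
        (norm_integral_le_integral_norm _)
    _ ≤ ∫ y in S, h y ∂μ := integral_mono_of_nonneg (ae_of_all _ fun _ => norm_nonneg _)
        hint.integrableOn (ae_restrict_of_forall_mem hS hgh)
    _ ≤ ∫ y, h y ∂μ := setIntegral_le_integral hint (ae_of_all _ fun _ => by positivity)
    _ = _ := by
        rw [integral_const_mul, integral_one_add_norm_sub_div_rpow μ s hτ.le, sub_eq_add_neg,
          rpow_add hτ, rpow_natCast]
        ring

lemma setIntegral_setIntegral_le {s : ℝ} (hs : (Module.finrank ℝ E : ℝ) < s)
    {τ L : ℝ} (hτ : 0 < τ) (hL : 0 ≤ L) {S T W : Set E} (hS : MeasurableSet S)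
    (hT : MeasurableSet T) (hW : MeasurableSet W) (hWμ : μ W ≠ ∞) {F : E → E → ℝ}
    (hsupp : ∀ x ∈ S, ∀ y ∈ T, F x y ≠ 0 → τ ≤ ‖x - y‖ ∧ x ∈ W)
    (hF : ∀ x ∈ S, ∀ y ∈ T, ‖F x y‖ ≤ L * ‖x - y‖ ^ (-s)) :
    ∫ x in S, ∫ y in T, F x y ∂μ ∂μ ≤ μ.real W *
      (2 ^ s * L * τ ^ ((Module.finrank ℝ E : ℝ) - s) * ∫ z, (1 + ‖z‖) ^ (-s) ∂μ) := by
  refine setIntegral_le_measureReal_mul hS hW hWμ (by positivity) fun x hx => ?_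
  by_cases hxW : x ∈ W
  · rw [indicator_of_mem hxW]
    refine setIntegral_le_of_norm_le_rpow μ (x := x) hs hτ hL hT (fun y hy hne => ?_)
      (fun y hy => ?_)
    · exact norm_sub_rev x y ▸ (hsupp x hx y hy hne).1
    · exact norm_sub_rev x y ▸ hF x hx y hy
  · rw [indicator_of_notMem hxW]
    exact (setIntegral_eq_zero_of_forall_eq_zero fun y hy =>
      by_contra fun hne => hxW (hsupp x hx y hy hne).2).le

end TailIntegral

section Kernel

variable {d : ℕ} {ε δ β p Mρ : ℝ} {ρ q : ℝ → ℝ} {lam : Rd d → ℝ}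

lemma abs_rhoKerEps_le (hε : 0 < ε) (hρ0 : ∀ t, 0 ≤ ρ t) (hρ : ∀ t, ρ t ≤ Mρ)
    (hβ : β < d + p) (x y : Rd d) :
    |rhoKerEps ε δ β p ρ q lam x y| ≤ Mρ * ‖y - x‖ ^ (-(d : ℝ)) := by
  have hMρ : 0 ≤ Mρ := (hρ0 0).trans (hρ 0)
  rw [rhoKerEps]
  split_ifs with h
  · rw [rhoKer]
    set η := etaD δ q lam x
    have hη : 0 < η := by
      by_contra! hη
      linarith [h.1, div_nonpos_of_nonneg_of_nonpos (norm_nonneg (y - x)) hη]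
    have hr : 0 < ‖y - x‖ / η := hε.trans_le h.1
    rw [abs_of_nonneg (mul_nonneg (mul_nonneg (by positivity) (hρ0 _)) (by positivity))]
    calc η ^ (-(d : ℝ)) * ρ (‖y - x‖ / η) * (‖y - x‖ / η) ^ (p - β)
        ≤ η ^ (-(d : ℝ)) * Mρ * (‖y - x‖ / η) ^ (-(d : ℝ)) :=
          mul_le_mul (mul_le_mul_of_nonneg_left (hρ _) (by positivity))
            (rpow_le_rpow_of_exponent_ge hr h.2.le (by linarith)) (by positivity)
            (mul_nonneg (by positivity) hMρ)
      _ = Mρ * (η * (‖y - x‖ / η)) ^ (-(d : ℝ)) := by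
          rw [mul_rpow hη.le hr.le]
          ring
      _ = Mρ * ‖y - x‖ ^ (-(d : ℝ)) := by rw [mul_div_cancel₀ _ hη.ne']
  · rw [abs_zero]
    positivity

lemma abs_deriv_inner_le {E : Type*} [NormedAddCommGroup E] [InnerProductSpace ℝ E]
    {Φ' : ℝ → ℝ} {CΦ : ℝ} (hΦ' : ∀ t, |Φ' t| ≤ CΦ * |t| ^ (p - 1)) (hp : 1 ≤ p)
    {G : E} {Mu : ℝ} (hG : ‖G‖ ≤ Mu) (w : E) :
    |Φ' ⟪G, ‖w‖⁻¹ • w⟫| ≤ CΦ * Mu ^ (p - 1) := by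
  have hCΦ : 0 ≤ CΦ := by simpa using (abs_nonneg _).trans (hΦ' 1)
  have hw : ‖‖w‖⁻¹ • w‖ ≤ 1 := by
    rcases eq_or_ne w 0 with rfl | hw
    · simp
    · exact (norm_smul_inv_norm hw).le
  have ht : |⟪G, ‖w‖⁻¹ • w⟫| ≤ Mu :=
    (abs_real_inner_le_norm _ _).trans <| (mul_le_of_le_one_right (norm_nonneg _) hw).trans hG
  exact (hΦ' _).trans <| mul_le_mul_of_nonneg_left
    (rpow_le_rpow (abs_nonneg _) ht (by linarith)) hCΦ

lemma abs_rhoKerEps_mul_deriv_mul_div_le (hε : 0 < ε) (hρ0 : ∀ t, 0 ≤ ρ t)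
    (hρ : ∀ t, ρ t ≤ Mρ) (hβ : β < d + p) {Φ' : ℝ → ℝ} {CΦ : ℝ}
    (hΦ' : ∀ t, |Φ' t| ≤ CΦ * |t| ^ (p - 1)) (hp : 1 ≤ p) {G : Rd d} {Mu : ℝ} (hG : ‖G‖ ≤ Mu)
    {a Mv : ℝ} (ha : |a| ≤ Mv) (x y : Rd d) :
    |rhoKerEps ε δ β p ρ q lam y x * Φ' ⟪G, ‖x - y‖⁻¹ • (x - y)⟫ * (a / ‖x - y‖)|
      ≤ Mρ * (CΦ * Mu ^ (p - 1)) * Mv * ‖x - y‖ ^ (-((d : ℝ) + 1)) := by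
  have hMρ : 0 ≤ Mρ := (hρ0 0).trans (hρ 0)
  have hquot : |a / ‖x - y‖| ≤ Mv * ‖x - y‖ ^ (-1 : ℝ) := by
    rw [abs_div, abs_norm, rpow_neg_one, div_eq_mul_inv]
    exact mul_le_mul_of_nonneg_right ha (inv_nonneg.mpr (norm_nonneg _))
  have hΦ := abs_deriv_inner_le hΦ' hp hG (x - y)
  have hkernel : |rhoKerEps ε δ β p ρ q lam y x| ≤ Mρ * ‖x - y‖ ^ (-(d : ℝ)) :=
    abs_rhoKerEps_le hε hρ0 hρ hβ y x
  have hd : -(d : ℝ) + -1 ≠ 0 := by linarith [d.cast_nonneg (α := ℝ)]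
  rw [abs_mul, abs_mul, neg_add, rpow_add' (norm_nonneg _) hd]
  calc |rhoKerEps ε δ β p ρ q lam y x| * |Φ' ⟪G, ‖x - y‖⁻¹ • (x - y)⟫| * |a / ‖x - y‖|
      ≤ (Mρ * ‖x - y‖ ^ (-(d : ℝ))) * (CΦ * Mu ^ (p - 1)) * (Mv * ‖x - y‖ ^ (-1 : ℝ)) :=
        mul_le_mul (mul_le_mul hkernel hΦ (abs_nonneg _) (mul_nonneg hMρ (by positivity)))
          hquot (abs_nonneg _)
          (mul_nonneg (mul_nonneg hMρ (by positivity)) ((abs_nonneg _).trans hΦ))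
    _ = _ := by ring
end Kernel

lemma measurableSet_forall_abs_fst'_lt {m : ℕ} (R : ℝ) :
    MeasurableSet {z : Rd (m+1) | ∀ i, |fst' z i| < R} := by
  simp only [ofPred_forall]
  exact .iInter fun i => measurableSet_lt
    ((continuous_apply i).comp ((PiLp.continuous_ofLp 2 _).comp
      lipschitzWith_fst'.continuous)).abs.measurable measurable_const

lemma apply_two_pow_mul_le {q : ℝ → ℝ} {C : ℝ} (hC : 0 ≤ C)
    (hq : ∀ r, 0 < r → q (2 * r) ≤ C * q r) (n : ℕ) {r : ℝ} (hr : 0 < r) :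
    q (2 ^ n * r) ≤ C ^ n * q r := by
  induction n generalizing r with
  | zero => simp
  | succ n ih =>
    calc q (2 ^ (n + 1) * r) = q (2 ^ n * (2 * r)) := by ring_nf
      _ ≤ C ^ n * q (2 * r) := ih (by positivity)
      _ ≤ C ^ n * (C * q r) := mul_le_mul_of_nonneg_left (hq r hr) (by positivity)
      _ = C ^ (n + 1) * q r := by ring

section BoundaryLayer

variable {m : ℕ} {φ : Rd m → ℝ} {K : ℝ≥0} {lam : Rd (m+1) → ℝ} {κ0 κ1 : ℝ} {q : ℝ → ℝ}
  {δ : ℝ} {ρ : ℝ → ℝ} {Mρ β p : ℝ} {Φ' : ℝ → ℝ} {CΦ : ℝ} {G : Rd (m+1) → Rd (m+1)} {Mu : ℝ}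
  {v : Rd (m+1) → ℝ} {Mv ϱ ε : ℝ}

lemma mul_mul_nonneg_of_forall_le (hρ0 : ∀ t, 0 ≤ ρ t) (hρ : ∀ t, ρ t ≤ Mρ)
    (hΦ' : ∀ t, |Φ' t| ≤ CΦ * |t| ^ (p - 1)) (hG : ∀ x, ‖G x‖ ≤ Mu) (hv : ∀ x, |v x| ≤ Mv) :
    0 ≤ Mρ * (CΦ * Mu ^ (p - 1)) * Mv :=
  mul_nonneg (mul_nonneg ((hρ0 0).trans (hρ 0))
      (mul_nonneg (by simpa using (abs_nonneg _).trans (hΦ' 1))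
        (rpow_nonneg ((norm_nonneg _).trans (hG 0)) _)))
    ((abs_nonneg _).trans (hv 0))

lemma integral_boundaryLayer_le_measureReal_mul (hφ : LipschitzWith K φ) (hκ0 : 0 < κ0)
    (hκ1 : 0 ≤ κ1) (hlam : IsRegularizedDistance φ lam κ0 κ1) (hq_mono : MonotoneOn q (Ici 0))
    (hq : ∀ r : ℝ, 0 < r → 0 < q r ∧ q r ≤ r) (hδ : 0 < δ) (hδκ1 : δ * κ1 < 1 / 3)
    (hρ0 : ∀ t, 0 ≤ ρ t) (hρ : ∀ t, ρ t ≤ Mρ) (hp : 1 ≤ p) (hβ : β < ((m + 1 : ℕ) : ℝ) + p)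
    (hΦ' : ∀ t, |Φ' t| ≤ CΦ * |t| ^ (p - 1)) (hG : ∀ x, ‖G x‖ ≤ Mu) (hv : ∀ x, |v x| ≤ Mv)
    (hε : 0 < ε) :
    ∫ x in {z : Rd (m+1) | (∀ i, |fst' z i| < ϱ) ∧
        φ (fst' z) < lastc z ∧ lastc z < φ (fst' z) + ε},
      ∫ y in {z : Rd (m+1) | (∀ i, |fst' z i| < 2 * ϱ) ∧ φ (fst' z) + ε < lastc z},
        rhoKerEps ε δ β p ρ q lam y x * Φ' ⟪G x, ‖x - y‖⁻¹ • (x - y)⟫ * (v x / ‖x - y‖)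
      ≤ volume.real {z : Rd (m+1) | (∀ i, |fst' z i| < ϱ) ∧
          φ (fst' z) + (ε - (1 + K) * (δ * q (2 * κ0 * ε))) < lastc z ∧
          lastc z < φ (fst' z) + ε} *
        (2 ^ (((m + 1 : ℕ) : ℝ) + 1) * (Mρ * (CΦ * Mu ^ (p - 1)) * Mv) *
          ∫ z : Rd (m+1), (1 + ‖z‖) ^ (-(((m + 1 : ℕ) : ℝ) + 1))) /
        (ε * (δ * q (ε / (κ0 * (1 + K))))) := by
  set ηm := δ * q (ε / (κ0 * (1 + K)))
  have hηm : 0 < ηm := mul_pos hδ (hq _ (by positivity)).1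
  have hφm : Measurable fun z : Rd (m+1) => φ (fst' z) :=
    (hφ.continuous.comp lipschitzWith_fst'.continuous).measurable
  have hlastm : Measurable (lastc (m := m)) := lipschitzWith_lastc.continuous.measurable
  set W := {z : Rd (m+1) | (∀ i, |fst' z i| < ϱ) ∧
    φ (fst' z) + (ε - (1 + K) * (δ * q (2 * κ0 * ε))) < lastc z ∧ lastc z < φ (fst' z) + ε}
  have hτ : (ε * ηm) ^ ((Module.finrank ℝ (Rd (m+1)) : ℝ) - (((m + 1 : ℕ) : ℝ) + 1))
      = (ε * ηm)⁻¹ := by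
    rw [finrank_euclideanSpace_fin, sub_add_cancel_left, rpow_neg_one]
  rw [mul_div_assoc, div_eq_mul_inv, mul_right_comm _ _ (ε * ηm)⁻¹, ← hτ]
  refine setIntegral_setIntegral_le volume (W := W) (by simp) (by positivity)
    (mul_mul_nonneg_of_forall_le hρ0 hρ hΦ' hG hv)
    ((measurableSet_forall_abs_fst'_lt ϱ).inter ((measurableSet_lt hφm hlastm).inter
      (measurableSet_lt hlastm (hφm.add_const ε))))
    ((measurableSet_forall_abs_fst'_lt (2 * ϱ)).inter (measurableSet_lt (hφm.add_const ε) hlastm))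
    ((measurableSet_forall_abs_fst'_lt ϱ).inter ((measurableSet_lt (hφm.add_const _) hlastm).inter
      (measurableSet_lt hlastm (hφm.add_const ε))))
    (by rw [volume_band hφ.continuous]; finiteness) (fun x hx y hy hne => ?_)
    (fun x _ y _ => (Real.norm_eq_abs _).trans_le
      (abs_rhoKerEps_mul_deriv_mul_div_le hε hρ0 hρ hβ hΦ' hp (hG x) (hv x) x y))
  obtain ⟨hdist, hheight⟩ := le_norm_sub_and_sub_lt_heightAbove hφ hκ0 hκ1 hlam hq_mono hq hδ
    hδκ1 hε hx.2.1 (sub_lt_iff_lt_add'.mpr hx.2.2) (lt_sub_iff_add_lt'.mpr hy.2)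
    (left_ne_zero_of_mul (left_ne_zero_of_mul hne))
  exact ⟨hdist, hx.1, by rw [heightAbove] at hheight; linarith, hx.2.2⟩

lemma integral_boundaryLayer_le (hφ : LipschitzWith K φ) (hκ0 : 0 < κ0) (hκ1 : 0 ≤ κ1)
    (hlam : IsRegularizedDistance φ lam κ0 κ1) (hq_mono : MonotoneOn q (Ici 0))
    (hq : ∀ r : ℝ, 0 < r → 0 < q r ∧ q r ≤ r) {Cq : ℝ} (hCq : 0 ≤ Cq)
    (hq_dbl : ∀ r : ℝ, 0 < r → q (2 * r) ≤ Cq * q r) {N : ℕ}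
    (hN : 2 * κ0 * (κ0 * (1 + K)) ≤ 2 ^ N) (hδ : 0 < δ) (hδκ1 : δ * κ1 < 1 / 3)
    (hρ0 : ∀ t, 0 ≤ ρ t) (hρ : ∀ t, ρ t ≤ Mρ) (hp : 1 ≤ p) (hβ : β < ((m + 1 : ℕ) : ℝ) + p)
    (hΦ' : ∀ t, |Φ' t| ≤ CΦ * |t| ^ (p - 1)) (hG : ∀ x, ‖G x‖ ≤ Mu) (hv : ∀ x, |v x| ≤ Mv)
    (hϱ : 0 ≤ ϱ) (hε : 0 < ε) :
    ∫ x in {z : Rd (m+1) | (∀ i, |fst' z i| < ϱ) ∧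
        φ (fst' z) < lastc z ∧ lastc z < φ (fst' z) + ε},
      ∫ y in {z : Rd (m+1) | (∀ i, |fst' z i| < 2 * ϱ) ∧ φ (fst' z) + ε < lastc z},
        rhoKerEps ε δ β p ρ q lam y x * Φ' ⟪G x, ‖x - y‖⁻¹ • (x - y)⟫ * (v x / ‖x - y‖)
      ≤ Mρ * CΦ * ((1 + K) * (2 * ϱ) ^ m * 2 ^ (((m + 1 : ℕ) : ℝ) + 1) *
          (∫ z : Rd (m+1), (1 + ‖z‖) ^ (-(((m + 1 : ℕ) : ℝ) + 1))) * Cq ^ N) *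
        (Mu ^ (p - 1) * Mv) / ε := by
  have hr : 0 < ε / (κ0 * (1 + K)) := by positivity
  have hq_ratio : q (2 * κ0 * ε) ≤ Cq ^ N * q (ε / (κ0 * (1 + K))) := by
    refine (hq_mono (by positivity : (0 : ℝ) ≤ 2 * κ0 * ε) (by positivity : (0 : ℝ) ≤ 2 ^ N * _)
      ?_).trans (apply_two_pow_mul_le hCq hq_dbl N hr)
    rw [mul_div_assoc', le_div_iff₀ (by positivity)]
    nlinarith
  have hvol : volume.real {z : Rd (m+1) | (∀ i, |fst' z i| < ϱ) ∧
      φ (fst' z) + (ε - (1 + K) * (δ * q (2 * κ0 * ε))) < lastc z ∧ lastc z < φ (fst' z) + ε}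
      = (1 + K) * (δ * q (2 * κ0 * ε)) * (2 * ϱ) ^ m := by
    rw [measureReal_def, volume_band hφ.continuous, sub_sub_cancel, ENNReal.toReal_mul,
      ENNReal.toReal_pow, ENNReal.toReal_ofReal
        (mul_nonneg (by positivity) (mul_nonneg hδ.le (hq _ (by positivity)).1.le)),
      ENNReal.toReal_ofReal (by positivity)]
  refine (integral_boundaryLayer_le_measureReal_mul hφ hκ0 hκ1 hlam hq_mono hq hδ hδκ1 hρ0 hρ hp
    hβ hΦ' hG hv hε).trans ?_
  rw [hvol, div_le_div_iff₀ (mul_pos hε (mul_pos hδ (hq _ hr).1)) hε]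
  have hA : 0 ≤ Mρ * (CΦ * Mu ^ (p - 1)) * Mv * ((1 + K) * (2 * ϱ) ^ m *
      2 ^ (((m + 1 : ℕ) : ℝ) + 1) * ∫ z : Rd (m+1), (1 + ‖z‖) ^ (-(((m + 1 : ℕ) : ℝ) + 1))) *
      (δ * ε) :=
    mul_nonneg (mul_nonneg (mul_mul_nonneg_of_forall_le hρ0 hρ hΦ' hG hv) (by positivity))
      (by positivity)
  nlinarith [mul_le_mul_of_nonneg_left hq_ratio hA]

end BoundaryLayer

lemma mul_lt_one_div_three_of_lt {δ κ X : ℝ} (hδ : 0 ≤ δ)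
    (h : δ < 1 / (3 * max 1 (max κ X))) : δ * κ < 1 / 3 := by
  have hX : 0 < max 1 (max κ X) := one_pos.trans_le (le_max_left _ _)
  rw [lt_div_iff₀ (by positivity)] at h
  nlinarith [le_max_of_le_right (le_max_left κ X) (b := 1)]

theorem statement_5_general {m : ℕ}
    -- the Lipschitz epigraph Ω_φ
    (φ : Rd m → ℝ) (M : ℝ)
    (hφ_lip : LipschitzWith (Real.toNNReal M) φ)
    -- (A_λ) on the epigraph
    (lam : Rd (m+1) → ℝ) (κ0 κ1 : ℝ) (hκ0 : 1 ≤ κ0) (hκ1 : 0 < κ1)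
    (hlam_lb : ∀ x ∈ closure {z : Rd (m+1) | φ (fst' z) < lastc z},
      κ0⁻¹ * Metric.infDist x (frontier {z : Rd (m+1) | φ (fst' z) < lastc z}) ≤ lam x)
    (hlam_ub : ∀ x ∈ closure {z : Rd (m+1) | φ (fst' z) < lastc z},
      lam x ≤ κ0 * Metric.infDist x (frontier {z : Rd (m+1) | φ (fst' z) < lastc z}))
    (hlam_lip : ∀ x ∈ {z : Rd (m+1) | φ (fst' z) < lastc z},
      ∀ y ∈ {z : Rd (m+1) | φ (fst' z) < lastc z}, |lam x - lam y| ≤ κ1 * ‖x - y‖)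
    -- (A_q) with q ∈ C^k, k ≥ 2
    (q : ℝ → ℝ) (Cq : ℝ) (k : ℕ) (hk : 2 ≤ k) (hq_Ck : ContDiff ℝ k q)
    (hq_pos : ∀ r : ℝ, 0 < r → 0 < q r ∧ q r ≤ r)
    (hq_deriv : ∀ r : ℝ, 0 ≤ r → 0 ≤ deriv q r ∧ deriv q r ≤ 1)
    (hCq : 1 ≤ Cq) (hq_dbl : ∀ r : ℝ, 0 < r → q (2 * r) ≤ Cq * q r)
    -- (A_δ)
    (δ : ℝ) (hδ : 0 < δ)
    (hδ0 : δ < 1 / (3 * max 1 (max κ1 (Cq * κ0 ^ Real.logb 2 Cq))))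
    -- (A_ρ)
    (ρ : ℝ → ℝ)
    (hρ_nonneg : ∀ t, 0 ≤ ρ t)
    (hρ_bdd : ∃ Mρ, ∀ t, ρ t ≤ Mρ)
    -- (A_Φ) with p ≥ 2
    (p : ℝ) (hp : 2 ≤ p) (Φ : ℝ → ℝ) (CΦ : ℝ)
    (hΦ'_bd : ∀ t : ℝ, |deriv Φ t| ≤ CΦ * |t| ^ (p - 1))
    -- exponent β ∈ [0, d + p)
    (β : ℝ) (hβub : β < (m+1 : ℝ) + p)
    -- side length of the cube Q
    (ϱ : ℝ) (hϱ : 0 < ϱ)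
    (u : Rd (m+1) → ℝ)
    (v : Rd (m+1) → ℝ) :
    -- conclusion: for all 0 < ε ≪ min{δ, ϱ}, the double integral is at most
    -- C·‖∇u‖_∞^{p−1}·‖v‖_∞ / ε², with C independent of ε
    ∃ ε₀ : ℝ, 0 < ε₀ ∧ ε₀ ≤ min δ ϱ ∧ ∃ C > 0,
      ∀ ε : ℝ, 0 < ε → ε < ε₀ →
      ∀ Mu Mv : ℝ, (∀ x, ‖gradient u x‖ ≤ Mu) → (∀ x, |v x| ≤ Mv) →
        (∫ x in {z : Rd (m+1) | (∀ i, |fst' z i| < ϱ) ∧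
              φ (fst' z) < lastc z ∧ lastc z < φ (fst' z) + ε},
            ∫ y in {z : Rd (m+1) | (∀ i, |fst' z i| < 2*ϱ) ∧ φ (fst' z) + ε < lastc z},
              rhoKerEps ε δ β p ρ q lam y x *
                deriv Φ (⟪gradient u x, ‖x - y‖⁻¹ • (x - y)⟫) * (v x / ‖x - y‖))
          ≤ C * Mu ^ (p - 1) * Mv / ε ^ 2 := by
  obtain ⟨Mρ, hMρ⟩ := hρ_bdd
  set K := M.toNNReal
  have hq_mono : MonotoneOn q (Ici 0) :=
    monotoneOn_of_deriv_nonneg (convex_Ici 0) hq_Ck.continuous.continuousOn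
      (hq_Ck.differentiable (by norm_cast; omega)).differentiableOn
      fun r hr => (hq_deriv r (interior_subset hr)).1
  obtain ⟨N, hN⟩ := pow_unbounded_of_one_lt (2 * κ0 * (κ0 * (1 + K))) one_lt_two
  set C₀ := Mρ * CΦ * ((1 + K) * (2 * ϱ) ^ m * 2 ^ (((m + 1 : ℕ) : ℝ) + 1) *
    (∫ z : Rd (m+1), (1 + ‖z‖) ^ (-(((m + 1 : ℕ) : ℝ) + 1))) * Cq ^ N)
  have hC₀ : 0 ≤ C₀ := mul_nonneg (mul_nonneg ((hρ_nonneg 0).trans (hMρ 0))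
    (by simpa using (abs_nonneg _).trans (hΦ'_bd 1))) (by positivity)
  refine ⟨min 1 (min δ ϱ), by positivity, min_le_right _ _, C₀ + 1, by linarith, ?_⟩
  intro ε hε hεlt Mu Mv hMu hMv
  have hP : 0 ≤ Mu ^ (p - 1) * Mv :=
    mul_nonneg (rpow_nonneg ((norm_nonneg _).trans (hMu 0)) _) ((abs_nonneg _).trans (hMv 0))
  have hε1 : ε ^ 2 ≤ ε := pow_le_of_le_one hε.le (hεlt.trans_le (min_le_left _ _)).le two_ne_zero
  calc _ ≤ C₀ * (Mu ^ (p - 1) * Mv) / ε :=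
        integral_boundaryLayer_le hφ_lip (by linarith) hκ1.le ⟨hlam_lb, hlam_ub, hlam_lip⟩ hq_mono
          hq_pos (by linarith) hq_dbl hN.le hδ (mul_lt_one_div_three_of_lt hδ.le hδ0) hρ_nonneg
          hMρ (by linarith) (by push_cast; linarith) hΦ'_bd hMu hMv hϱ.le hε
    _ ≤ (C₀ + 1) * Mu ^ (p - 1) * Mv / ε ^ 2 := by
        rw [div_le_div_iff₀ hε (by positivity)]
        nlinarith [mul_le_mul_of_nonneg_left hε1 (mul_nonneg hC₀ hP), mul_nonneg hP hε.le]

/-- finiteness of the reversed-kernel boundary integral in the special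
Lipschitz epigraph setting (total dimension `d = m + 1`). -/
theorem statement_5 {m : ℕ}
    -- the Lipschitz epigraph Ω_φ
    (φ : Rd m → ℝ) (M : ℝ) (hM : 0 ≤ M)
    (hφ_lip : LipschitzWith (Real.toNNReal M) φ) (hφ_nonneg : ∀ x', 0 ≤ φ x')
    -- (A_λ) on the epigraph
    (lam : Rd (m+1) → ℝ) (κ0 κ1 : ℝ) (hκ0 : 1 ≤ κ0) (hκ1 : 0 < κ1)
    (hlam_nonneg : ∀ x ∈ closure {z : Rd (m+1) | φ (fst' z) < lastc z}, 0 ≤ lam x)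
    (hlam_lb : ∀ x ∈ closure {z : Rd (m+1) | φ (fst' z) < lastc z},
      κ0⁻¹ * Metric.infDist x (frontier {z : Rd (m+1) | φ (fst' z) < lastc z}) ≤ lam x)
    (hlam_ub : ∀ x ∈ closure {z : Rd (m+1) | φ (fst' z) < lastc z},
      lam x ≤ κ0 * Metric.infDist x (frontier {z : Rd (m+1) | φ (fst' z) < lastc z}))
    (hlam_lip : ∀ x ∈ {z : Rd (m+1) | φ (fst' z) < lastc z},
      ∀ y ∈ {z : Rd (m+1) | φ (fst' z) < lastc z}, |lam x - lam y| ≤ κ1 * ‖x - y‖)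
    -- (A_q) with q ∈ C^k, k ≥ 2
    (q : ℝ → ℝ) (Cq cq : ℝ) (k : ℕ) (hk : 2 ≤ k) (hq_Ck : ContDiff ℝ k q) (hq0 : q 0 = 0)
    (hq_pos : ∀ r : ℝ, 0 < r → 0 < q r ∧ q r ≤ r)
    (hq_deriv : ∀ r : ℝ, 0 ≤ r → 0 ≤ deriv q r ∧ deriv q r ≤ 1)
    (hcq : 0 < cq) (hq_deriv_pos : ∀ r ∈ Set.Ioc (0:ℝ) cq, 0 < deriv q r)
    (hCq : 1 ≤ Cq) (hq_dbl : ∀ r : ℝ, 0 < r → q (2 * r) ≤ Cq * q r)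
    -- (A_δ)
    (δ : ℝ) (hδ : 0 < δ)
    (hδ0 : δ < 1 / (3 * max 1 (max κ1 (Cq * κ0 ^ Real.logb 2 Cq))))
    -- (A_ρ)
    (ρ : ℝ → ℝ) (cρ : ℝ) (hcρ : 0 < cρ)
    (hρ_nonneg : ∀ t, 0 ≤ ρ t) (hρ_even : ∀ t, ρ (-t) = ρ t)
    (hρ_bdd : ∃ Mρ, ∀ t, ρ t ≤ Mρ)
    (hρ_supp1 : Set.Icc (-cρ) cρ ⊆ tsupport ρ)
    (hρ_supp2 : tsupport ρ ⊆ Set.Ioo (-1) 1)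
    -- (A_Φ) with p ≥ 2
    (p : ℝ) (hp : 2 ≤ p) (Φ : ℝ → ℝ) (cΦ CΦ : ℝ) (hcΦ : 0 < cΦ) (hCΦ : cΦ ≤ CΦ)
    (hΦ_C2 : ContDiff ℝ 2 Φ) (hΦ_even : ∀ t, Φ (-t) = Φ t)
    (hΦ_conv : ConvexOn ℝ Set.univ Φ)
    (hΦ_bd : ∀ t : ℝ, cΦ * |t| ^ p ≤ Φ t ∧ Φ t ≤ CΦ * |t| ^ p)
    (hΦ'_bd : ∀ t : ℝ, |deriv Φ t| ≤ CΦ * |t| ^ (p - 1))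
    (hΦ'_coer : ∀ t : ℝ, |t| ^ p ≤ deriv Φ t * t)
    (hΦ''_bd : ∀ t : ℝ, cΦ * |t| ^ (p - 2) ≤ |deriv (deriv Φ) t| ∧
        |deriv (deriv Φ) t| ≤ CΦ * |t| ^ (p - 2))
    -- exponent β ∈ [0, d + p)
    (β : ℝ) (hβ0 : 0 ≤ β) (hβub : β < (m+1 : ℝ) + p)
    -- side length of the cube Q
    (ϱ : ℝ) (hϱ : 0 < ϱ)
    -- u, v ∈ C²_b(ℝ^d)
    (u : Rd (m+1) → ℝ) (hu : ContDiff ℝ 2 u)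
    (hub : ∃ Mu, ∀ x, |u x| ≤ Mu ∧ ‖gradient u x‖ ≤ Mu ∧ ‖iteratedFDeriv ℝ 2 u x‖ ≤ Mu)
    (v : Rd (m+1) → ℝ) (hv : ContDiff ℝ 2 v)
    (hvb : ∃ Mv, ∀ x, |v x| ≤ Mv ∧ ‖gradient v x‖ ≤ Mv ∧ ‖iteratedFDeriv ℝ 2 v x‖ ≤ Mv) :
    -- conclusion: for all 0 < ε ≪ min{δ, ϱ}, the double integral is at most
    -- C·‖∇u‖_∞^{p−1}·‖v‖_∞ / ε², with C independent of ε
    ∃ ε₀ : ℝ, 0 < ε₀ ∧ ε₀ ≤ min δ ϱ ∧ ∃ C > 0,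
      ∀ ε : ℝ, 0 < ε → ε < ε₀ →
      ∀ Mu Mv : ℝ, (∀ x, ‖gradient u x‖ ≤ Mu) → (∀ x, |v x| ≤ Mv) →
        (∫ x in {z : Rd (m+1) | (∀ i, |fst' z i| < ϱ) ∧
              φ (fst' z) < lastc z ∧ lastc z < φ (fst' z) + ε},
            ∫ y in {z : Rd (m+1) | (∀ i, |fst' z i| < 2*ϱ) ∧ φ (fst' z) + ε < lastc z},
              rhoKerEps ε δ β p ρ q lam y x *
                deriv Φ (⟪gradient u x, ‖x - y‖⁻¹ • (x - y)⟫) * (v x / ‖x - y‖))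
          ≤ C * Mu ^ (p - 1) * Mv / ε ^ 2 :=
  statement_5_general φ M hφ_lip lam κ0 κ1 hκ0 hκ1 hlam_lb hlam_ub hlam_lip q Cq k hk hq_Ck hq_pos
    hq_deriv hCq hq_dbl δ hδ hδ0 ρ hρ_nonneg hρ_bdd p hp Φ CΦ hΦ'_bd β hβub ϱ hϱ u v
end
end

section
/- Support of boundary-localized convolutions: Assume (A_q), (A_λ), (A_ψ) and (A_δ). Suppose v is continuous on cl Ω and there exists c_v > 0 with supp v ⊂ {x ∈ Ω : η(x) ≥ c_v}. Then K_δ v vanishes on {x ∈ Ω : η(x) < c_v/(1 + κ₁δ)} and K*_δ v vanishes on {x ∈ Ω : η(x) < (1 − κ₁δ)·c_v}; that is, supp K_δ v ⊂ {η ≥ c_v/(1 + κ₁δ)} and supp K*_δ v ⊂ {η ≥ (1 − κ₁δ)·c_v}. -/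
open MeasureTheory Real Set Filter Metric
open scoped ENNReal NNReal Topology RealInnerProductSpace

noncomputable section

/-- The boundary-localized convolution `K_δ u`. -/
def Kconv {d : ℕ} (δ : ℝ) (q : ℝ → ℝ) (lam : Rd d → ℝ) (ψ : ℝ → ℝ) (Ω : Set (Rd d))
    (u : Rd d → ℝ) (x : Rd d) : ℝ :=
  ∫ y in Ω, (etaD δ q lam x) ^ (-(d : ℝ)) * ψ (‖y - x‖ / etaD δ q lam x) * u y

/-- The adjoint boundary-localized convolution `K*_δ u`. -/
def KconvAdj {d : ℕ} (δ : ℝ) (q : ℝ → ℝ) (lam : Rd d → ℝ) (ψ : ℝ → ℝ) (Ω : Set (Rd d))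
    (u : Rd d → ℝ) (x : Rd d) : ℝ :=
  ∫ y in Ω, (etaD δ q lam y) ^ (-(d : ℝ)) * ψ (‖y - x‖ / etaD δ q lam y) * u y

/-!
Since `η_δ ≥ 0` and `ψ` vanishes off `(-1, 1)`, the integrand of `K_δ v(x)` (resp. `K*_δ v(x)`)
at `y` vanishes unless `‖y - x‖ < η_δ(x)` (resp. `< η_δ(y)`). As `q` is 1-Lipschitz on `[0, ∞)`,
`η = q ∘ λ` is `κ₁`-Lipschitz on `Ω`, so such a `y` satisfies `η(y) < (1 + κ₁δ) η(x)`
(resp. `(1 - κ₁δ) η(y) < η(x)`). Under the respective hypothesis on `η(x)` this forces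
`η(y) < c_v`, hence `v(y) = 0`.
-/

lemma abs_sub_le_of_deriv_mem_Icc {f : ℝ → ℝ} (hf : Differentiable ℝ f)
    (hf' : ∀ r, 0 ≤ r → 0 ≤ deriv f r ∧ deriv f r ≤ 1) {a b : ℝ} (ha : 0 ≤ a) (hb : 0 ≤ b) :
    |f a - f b| ≤ |a - b| := by
  simpa only [Real.norm_eq_abs, one_mul] using
    (convex_Ici (0 : ℝ)).norm_image_sub_le_of_norm_deriv_le (fun x _ => hf.differentiableAt)
      (fun x hx => abs_le.2 ⟨by linarith [(hf' x hx).1], (hf' x hx).2⟩) hb ha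

lemma rpow_neg_mul_mul_eq_zero_of_not_lt {d : ℕ} (hd : 1 ≤ d) {ψ : ℝ → ℝ}
    (hψ : tsupport ψ ⊆ Ioo (-1) 1) {η r : ℝ} (hη : 0 ≤ η) (u : ℝ) (hu : r < η → u = 0) :
    η ^ (-(d : ℝ)) * ψ (r / η) * u = 0 := by
  rcases hη.eq_or_lt with rfl | hη
  -- here `r / 0 = 0`, so only the factor `0 ^ (-d) = 0` (which needs `d ≠ 0`) kills the term
  · rw [Real.zero_rpow (by simp; omega), zero_mul, zero_mul]
  by_cases hr : r < η
  · rw [hu hr, mul_zero]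
  · have hψr : ψ (r / η) = 0 :=
      image_eq_zero_of_notMem_tsupport fun h => (hψ h).2.not_ge ((one_le_div hη).2 (not_lt.1 hr))
    rw [hψr, mul_zero, zero_mul]

section Support

variable {d : ℕ} (hd : 1 ≤ d) {ψ : ℝ → ℝ} (hψ : tsupport ψ ⊆ Ioo (-1) 1)
  {δ : ℝ} {q : ℝ → ℝ} {lam : Rd d → ℝ} {Ω : Set (Rd d)} {v : Rd d → ℝ} {x : Rd d}
include hd hψ

lemma Kconv_eq_zero_of_forall_lt (hη : 0 ≤ etaD δ q lam x)
    (hv : ∀ y ∈ Ω, ‖y - x‖ < etaD δ q lam x → v y = 0) : Kconv δ q lam ψ Ω v x = 0 :=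
  setIntegral_eq_zero_of_forall_eq_zero fun y hy =>
    rpow_neg_mul_mul_eq_zero_of_not_lt hd hψ hη _ (hv y hy)

lemma KconvAdj_eq_zero_of_forall_lt (hη : ∀ y ∈ Ω, 0 ≤ etaD δ q lam y)
    (hv : ∀ y ∈ Ω, ‖y - x‖ < etaD δ q lam y → v y = 0) : KconvAdj δ q lam ψ Ω v x = 0 :=
  setIntegral_eq_zero_of_forall_eq_zero fun y hy =>
    rpow_neg_mul_mul_eq_zero_of_not_lt hd hψ (hη y hy) _ (hv y hy)

end Support

lemma lt_of_sub_le_of_lt_div_one_add {a b c κ δ r : ℝ} (hκ : 0 ≤ κ) (hδ : 0 ≤ δ)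
    (hab : b - a ≤ κ * r) (hr : r < δ * a) (ha : a < c / (1 + κ * δ)) : b < c := by
  have h1 : 0 < 1 + κ * δ := by positivity
  have h2 : κ * r ≤ κ * (δ * a) := mul_le_mul_of_nonneg_left hr.le hκ
  have h3 : a * (1 + κ * δ) < c := (lt_div_iff₀ h1).1 ha
  nlinarith

lemma lt_of_sub_le_of_lt_one_sub_mul {a b c κ δ r : ℝ} (hκ : 0 ≤ κ) (ha : 0 ≤ a) (hc : 0 ≤ c)
    (hab : b - a ≤ κ * r) (hr : r < δ * b) (h : a < (1 - κ * δ) * c) : b < c := by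
  have h1 : (1 - κ * δ) * b ≤ a := by nlinarith [mul_le_mul_of_nonneg_left hr.le hκ]
  by_contra! hcb
  rcases le_or_gt 0 (1 - κ * δ) with hκδ | hκδ
  · linarith [mul_le_mul_of_nonneg_left hcb hκδ]
  · linarith [mul_nonpos_of_nonpos_of_nonneg hκδ.le hc]

theorem statement_13_general {d : ℕ} (hd : 1 ≤ d)
    (Ω : Set (Rd d))
    -- (A_λ)
    (lam : Rd d → ℝ) (κ1 : ℝ) (hκ1 : 0 < κ1)
    (hlam_nonneg : ∀ x ∈ closure Ω, 0 ≤ lam x)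
    (hlam_lip : ∀ x ∈ Ω, ∀ y ∈ Ω, |lam x - lam y| ≤ κ1 * ‖x - y‖)
    -- (A_q)
    (q : ℝ → ℝ) (hq_C1 : ContDiff ℝ 1 q) (hq0 : q 0 = 0)
    (hq_pos : ∀ r : ℝ, 0 < r → 0 < q r ∧ q r ≤ r)
    (hq_deriv : ∀ r : ℝ, 0 ≤ r → 0 ≤ deriv q r ∧ deriv q r ≤ 1)
    -- (A_δ)
    (δ : ℝ) (hδ : 0 < δ)
    -- (A_ψ)
    (ψ : ℝ → ℝ)
    (hψ_supp2 : tsupport ψ ⊆ Set.Ioo (-1) 1)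
    -- v : continuous on cl Ω with support in {x ∈ Ω : η(x) ≥ c_v}
    (v : Rd d → ℝ)
    (cv : ℝ) (hcv : 0 < cv)
    (hv_supp : Function.support v ⊆ {x ∈ Ω | cv ≤ q (lam x)}) :
    (∀ x ∈ Ω, q (lam x) < cv / (1 + κ1 * δ) → Kconv δ q lam ψ Ω v x = 0) ∧
    (∀ x ∈ Ω, q (lam x) < (1 - κ1 * δ) * cv → KconvAdj δ q lam ψ Ω v x = 0) ∧
    (Function.support (Kconv δ q lam ψ Ω v) ∩ Ω ⊆ {x | cv / (1 + κ1 * δ) ≤ q (lam x)}) ∧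
    (Function.support (KconvAdj δ q lam ψ Ω v) ∩ Ω ⊆ {x | (1 - κ1 * δ) * cv ≤ q (lam x)}) := by
  have hlam : ∀ x ∈ Ω, 0 ≤ lam x := fun x hx => hlam_nonneg x (subset_closure hx)
  have hη_nonneg : ∀ x ∈ Ω, 0 ≤ q (lam x) := fun x hx =>
    (hlam x hx).eq_or_lt.elim (fun h => by rw [← h, hq0]) fun h => (hq_pos _ h).1.le
  have hη_lip : ∀ x ∈ Ω, ∀ y ∈ Ω, q (lam y) - q (lam x) ≤ κ1 * ‖y - x‖ := fun x hx y hy =>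
    (le_abs_self _).trans <| (abs_sub_le_of_deriv_mem_Icc (hq_C1.differentiable one_ne_zero)
      hq_deriv (hlam y hy) (hlam x hx)).trans (hlam_lip y hy x hx)
  have hv_zero : ∀ y ∈ Ω, q (lam y) < cv → v y = 0 := fun y _ hy =>
    Function.notMem_support.1 fun h => (hv_supp h).2.not_gt hy
  have hK : ∀ x ∈ Ω, q (lam x) < cv / (1 + κ1 * δ) → Kconv δ q lam ψ Ω v x = 0 :=
    fun x hx hηx => Kconv_eq_zero_of_forall_lt hd hψ_supp2
      (mul_nonneg hδ.le (hη_nonneg x hx)) fun y hy hyx => hv_zero y hy <|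
        lt_of_sub_le_of_lt_div_one_add hκ1.le hδ.le (hη_lip x hx y hy) hyx hηx
  have hK' : ∀ x ∈ Ω, q (lam x) < (1 - κ1 * δ) * cv → KconvAdj δ q lam ψ Ω v x = 0 :=
    fun x hx hηx => KconvAdj_eq_zero_of_forall_lt hd hψ_supp2
      (fun y hy => mul_nonneg hδ.le (hη_nonneg y hy)) fun y hy hyx => hv_zero y hy <|
        lt_of_sub_le_of_lt_one_sub_mul hκ1.le (hη_nonneg x hx) hcv.le (hη_lip x hx y hy) hyx hηx
  exact ⟨hK, hK', fun x ⟨hKx, hx⟩ => not_lt.1 fun h => hKx (hK x hx h),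
    fun x ⟨hKx, hx⟩ => not_lt.1 fun h => hKx (hK' x hx h)⟩

/-- support of boundary-localized convolutions. -/
theorem statement_13 {d : ℕ} (hd : 1 ≤ d)
    (Ω : Set (Rd d)) (hΩo : IsOpen Ω) (hΩne : Ω.Nonempty)
    (hΩb : Bornology.IsBounded Ω) (hΩc : IsConnected Ω)
    -- (A_λ)
    (lam : Rd d → ℝ) (κ0 κ1 : ℝ) (hκ0 : 1 ≤ κ0) (hκ1 : 0 < κ1)
    (hlam_nonneg : ∀ x ∈ closure Ω, 0 ≤ lam x)
    (hlam_lb : ∀ x ∈ closure Ω, κ0⁻¹ * Metric.infDist x (frontier Ω) ≤ lam x)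
    (hlam_ub : ∀ x ∈ closure Ω, lam x ≤ κ0 * Metric.infDist x (frontier Ω))
    (hlam_lip : ∀ x ∈ Ω, ∀ y ∈ Ω, |lam x - lam y| ≤ κ1 * ‖x - y‖)
    -- (A_q)
    (q : ℝ → ℝ) (Cq cq : ℝ) (hq_C1 : ContDiff ℝ 1 q) (hq0 : q 0 = 0)
    (hq_pos : ∀ r : ℝ, 0 < r → 0 < q r ∧ q r ≤ r)
    (hq_deriv : ∀ r : ℝ, 0 ≤ r → 0 ≤ deriv q r ∧ deriv q r ≤ 1)
    (hcq : 0 < cq) (hq_deriv_pos : ∀ r ∈ Set.Ioc (0:ℝ) cq, 0 < deriv q r)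
    (hCq : 1 ≤ Cq) (hq_dbl : ∀ r : ℝ, 0 < r → q (2 * r) ≤ Cq * q r)
    -- (A_δ)
    (δ : ℝ) (hδ : 0 < δ)
    (hδ0 : δ < 1 / (3 * max 1 (max κ1 (Cq * κ0 ^ Real.logb 2 Cq))))
    -- (A_ψ)
    (ψ : ℝ → ℝ) (cψ : ℝ) (hcψ : 0 < cψ)
    (hψ_nonneg : ∀ t, 0 ≤ ψ t) (hψ_even : ∀ t, ψ (-t) = ψ t)
    (hψ_supp1 : Set.Icc (-cψ) cψ ⊆ tsupport ψ)
    (hψ_supp2 : tsupport ψ ⊆ Set.Ioo (-1) 1)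
    (hψ_norm : ∫ x : Rd d, ψ ‖x‖ = 1)
    -- v : continuous on cl Ω with support in {x ∈ Ω : η(x) ≥ c_v}
    (v : Rd d → ℝ) (hv : ContinuousOn v (closure Ω))
    (cv : ℝ) (hcv : 0 < cv)
    (hv_supp : Function.support v ⊆ {x ∈ Ω | cv ≤ q (lam x)}) :
    (∀ x ∈ Ω, q (lam x) < cv / (1 + κ1 * δ) → Kconv δ q lam ψ Ω v x = 0) ∧
    (∀ x ∈ Ω, q (lam x) < (1 - κ1 * δ) * cv → KconvAdj δ q lam ψ Ω v x = 0) ∧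
    (Function.support (Kconv δ q lam ψ Ω v) ∩ Ω ⊆ {x | cv / (1 + κ1 * δ) ≤ q (lam x)}) ∧
    (Function.support (KconvAdj δ q lam ψ Ω v) ∩ Ω ⊆ {x | (1 - κ1 * δ) * cv ≤ q (lam x)}) :=
  statement_13_general hd Ω lam κ1 hκ1 hlam_nonneg hlam_lip q hq_C1 hq0 hq_pos hq_deriv δ hδ ψ
    hψ_supp2 v cv hcv hv_supp
end
end
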